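/- arXiv:1710.02608 — 9 statements merged into one kernel-verified Lean document; each statement's English description precedes it below -/
import Mathlib

section
/- Let A ⊆ ℝ^d be a proper linear subspace, let P ⊆ A and Q ⊆ A^⊥ be nonempty finite sets, let x be the minimum norm point of the affine hull of P, let y be the minimum norm point of the affine hull of Q, and let z be the minimum norm point of the affine hull of P ∪ Q. Then z is the point of minimum Euclidean norm in the segment [x, y] = {t·x + (1 − t)·y : t ∈ [0,1]}, and if x ≠ 0 or y ≠ 0, then z = λ·x + (1 − λ)·y with λ = ‖y‖² / (‖x‖² + ‖y‖²). -/
/-!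
A point `x` of an affine subspace `S` has minimum norm iff it is orthogonal to the direction
of `S`, i.e. iff `⟪x, ·⟫` is constant on `S`; Pythagoras then makes it the unique such point.
For `z₀ = λ • x + (1 - λ) • y`, orthogonality of `A` and `Aᗮ` gives `⟪z₀, u⟫ = λ ‖x‖²` on `P`
and `(1 - λ) ‖y‖²` on `Q`, and `λ = ‖y‖² / (‖x‖² + ‖y‖²)` is exactly the weight making these
equal. Hence `z₀` is orthogonal to the direction of `aff (P ∪ Q)`, so `z = z₀`; and since the
segment `[x, y]` lies in `aff (P ∪ Q)` and contains `z₀`, `z` also minimizes the norm on it.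
-/

open RealInnerProductSpace

variable {E : Type*} [NormedAddCommGroup E] [InnerProductSpace ℝ E]

namespace AffineSubspace
variable {S : AffineSubspace ℝ E} {x : E}

theorem inner_eq_zero_of_forall_norm_le (hx : x ∈ S) (hmin : ∀ w ∈ S, ‖x‖ ≤ ‖w‖) {v : E}
    (hv : v ∈ S.direction) : ⟪x, v⟫ = 0 := by
  have : Nonempty (S : Set E) := ⟨⟨x, hx⟩⟩
  have hinf : ‖0 - x‖ = ⨅ w : (S : Set E), ‖0 - (w : E)‖ := by
    simp only [zero_sub, norm_neg]
    refine le_antisymm (le_ciInf fun w => hmin w w.2) (ciInf_le ?_ (⟨x, hx⟩ : (S : Set E)))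
    exact ⟨0, by rintro _ ⟨w, rfl⟩; exact norm_nonneg _⟩
  have h := (norm_eq_iInf_iff_real_inner_le_zero S.convex hx).1 hinf
  have h₁ := h (v +ᵥ x) (S.vadd_mem_of_mem_direction hv hx)
  have h₂ := h (-v +ᵥ x) (S.vadd_mem_of_mem_direction (S.direction.neg_mem hv) hx)
  simp only [vadd_eq_add, add_sub_cancel_right, zero_sub, inner_neg_left, inner_neg_right] at h₁ h₂
  linarith

theorem norm_sq_eq_add_of_inner_direction_eq_zero (hx : x ∈ S)
    (horth : ∀ v ∈ S.direction, ⟪x, v⟫ = 0) {w : E} (hw : w ∈ S) :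
    ‖w‖ ^ 2 = ‖x‖ ^ 2 + ‖w - x‖ ^ 2 := by
  have h := horth (w -ᵥ x) (S.vsub_mem_direction hw hx)
  have h' := norm_add_sq_real x (w -ᵥ x)
  rw [h, vsub_eq_sub, add_sub_cancel] at h'
  rw [h', mul_zero, add_zero]

theorem eq_of_norm_le_of_inner_direction_eq_zero (hx : x ∈ S)
    (horth : ∀ v ∈ S.direction, ⟪x, v⟫ = 0) {w : E} (hw : w ∈ S) (hle : ‖w‖ ≤ ‖x‖) : w = x := by
  have := norm_sq_eq_add_of_inner_direction_eq_zero hx horth hw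
  have : ‖w - x‖ ^ 2 = 0 := by nlinarith [sq_nonneg ‖w - x‖, norm_nonneg w]
  simpa [sub_eq_zero] using this

theorem inner_eq_norm_sq_of_forall_norm_le (hx : x ∈ S) (hmin : ∀ w ∈ S, ‖x‖ ≤ ‖w‖) {u : E}
    (hu : u ∈ S) : ⟪x, u⟫ = ‖x‖ ^ 2 := by
  have h := inner_eq_zero_of_forall_norm_le hx hmin (S.vsub_mem_direction hu hx)
  rwa [vsub_eq_sub, inner_sub_right, real_inner_self_eq_norm_sq, sub_eq_zero] at h

end AffineSubspace

theorem inner_eq_zero_of_mem_vectorSpan_of_forall_inner_eq {T : Set E} {z : E} {c : ℝ}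
    (h : ∀ u ∈ T, ⟪z, u⟫ = c) {v : E} (hv : v ∈ vectorSpan ℝ T) : ⟪z, v⟫ = 0 := by
  have : vectorSpan ℝ T ≤ LinearMap.ker (innerₛₗ ℝ z) := by
    refine Submodule.span_le.2 ?_
    rintro _ ⟨u, hu, w, hw, rfl⟩
    simp [inner_sub_right, h u hu, h w hw]
  exact this hv

-- Also for `a = b = 0`, where `b / (a + b) = 0`.
theorem div_add_mul_eq_one_sub_div_add_mul {a b : ℝ} (ha : 0 ≤ a) (hb : 0 ≤ b) :
    b / (a + b) * a = (1 - b / (a + b)) * b := by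
  rcases (add_nonneg ha hb).eq_or_lt with hab | hab
  · obtain ⟨rfl, rfl⟩ : a = 0 ∧ b = 0 := ⟨by linarith, by linarith⟩
    simp
  · field_simp
    ring

theorem Submodule.mem_of_mem_affineSpan_of_subset {k V : Type*} [Ring k] [AddCommGroup V]
    [Module k V] {A : Submodule k V} {P : Set V} (hPA : P ⊆ A) {u : V}
    (hu : u ∈ affineSpan k P) : u ∈ A :=
  Submodule.mem_toAffineSubspace.1 (affineSpan_le.2 hPA hu)

theorem eq_smul_add_one_sub_smul_of_forall_norm_le {A : Submodule ℝ E} {P Q : Set E}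
    (hPA : P ⊆ A) (hQA : Q ⊆ Aᗮ) {x y z : E}
    (hxmem : x ∈ affineSpan ℝ P) (hxmin : ∀ w ∈ affineSpan ℝ P, ‖x‖ ≤ ‖w‖)
    (hymem : y ∈ affineSpan ℝ Q) (hymin : ∀ w ∈ affineSpan ℝ Q, ‖y‖ ≤ ‖w‖)
    (hzmem : z ∈ affineSpan ℝ (P ∪ Q)) (hzmin : ∀ w ∈ affineSpan ℝ (P ∪ Q), ‖z‖ ≤ ‖w‖) :
    z = (‖y‖ ^ 2 / (‖x‖ ^ 2 + ‖y‖ ^ 2)) • x + (1 - ‖y‖ ^ 2 / (‖x‖ ^ 2 + ‖y‖ ^ 2)) • y := by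
  set t := ‖y‖ ^ 2 / (‖x‖ ^ 2 + ‖y‖ ^ 2)
  set z₀ := t • x + (1 - t) • y
  have hxA : x ∈ A := Submodule.mem_of_mem_affineSpan_of_subset hPA hxmem
  have hyA : y ∈ Aᗮ := Submodule.mem_of_mem_affineSpan_of_subset hQA hymem
  have hbalance : t * ‖x‖ ^ 2 = (1 - t) * ‖y‖ ^ 2 :=
    div_add_mul_eq_one_sub_div_add_mul (sq_nonneg _) (sq_nonneg _)
  have hconst : ∀ u ∈ P ∪ Q, ⟪z₀, u⟫ = t * ‖x‖ ^ 2 := by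
    rintro u (hu | hu)
    · have hxu := AffineSubspace.inner_eq_norm_sq_of_forall_norm_le hxmem hxmin
        (subset_affineSpan ℝ P hu)
      have hyu : ⟪y, u⟫ = 0 := Submodule.inner_left_of_mem_orthogonal (hPA hu) hyA
      simp only [z₀, inner_add_left, real_inner_smul_left, hxu, hyu]
      ring
    · have hxu : ⟪x, u⟫ = 0 := Submodule.inner_right_of_mem_orthogonal hxA (hQA hu)
      have hyu := AffineSubspace.inner_eq_norm_sq_of_forall_norm_le hymem hymin
        (subset_affineSpan ℝ Q hu)
      simp only [z₀, inner_add_left, real_inner_smul_left, hxu, hyu, hbalance]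
      ring
  have hz₀mem : z₀ ∈ affineSpan ℝ (P ∪ Q) := by
    have := AffineMap.lineMap_mem t (affineSpan_mono ℝ Set.subset_union_right hymem)
      (affineSpan_mono ℝ Set.subset_union_left hxmem)
    rwa [AffineMap.lineMap_apply_module, add_comm] at this
  have horth : ∀ v ∈ (affineSpan ℝ (P ∪ Q)).direction, ⟪z₀, v⟫ = 0 := fun v hv =>
    inner_eq_zero_of_mem_vectorSpan_of_forall_inner_eq hconst
      (direction_affineSpan ℝ (P ∪ Q) ▸ hv)
  exact AffineSubspace.eq_of_norm_le_of_inner_direction_eq_zero hz₀mem horth hzmem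
    (hzmin z₀ hz₀mem)

theorem stmt_3_general (d : ℕ) (A : Submodule ℝ (EuclideanSpace ℝ (Fin d)))
    (P Q : Set (EuclideanSpace ℝ (Fin d)))
    (hPA : P ⊆ (A : Set (EuclideanSpace ℝ (Fin d))))
    (hQA : Q ⊆ (Aᗮ : Set (EuclideanSpace ℝ (Fin d))))
    (x y z : EuclideanSpace ℝ (Fin d))
    (hxmem : x ∈ affineSpan ℝ P) (hxmin : ∀ w ∈ affineSpan ℝ P, ‖x‖ ≤ ‖w‖)
    (hymem : y ∈ affineSpan ℝ Q) (hymin : ∀ w ∈ affineSpan ℝ Q, ‖y‖ ≤ ‖w‖)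
    (hzmem : z ∈ affineSpan ℝ (P ∪ Q)) (hzmin : ∀ w ∈ affineSpan ℝ (P ∪ Q), ‖z‖ ≤ ‖w‖) :
    (z ∈ segment ℝ x y ∧ ∀ w ∈ segment ℝ x y, ‖z‖ ≤ ‖w‖) ∧
      ((x ≠ 0 ∨ y ≠ 0) →
        z = (‖y‖ ^ 2 / (‖x‖ ^ 2 + ‖y‖ ^ 2)) • x +
            (1 - ‖y‖ ^ 2 / (‖x‖ ^ 2 + ‖y‖ ^ 2)) • y) := by
  have hz :=
    eq_smul_add_one_sub_smul_of_forall_norm_le hPA hQA hxmem hxmin hymem hymin hzmem hzmin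
  have hseg : segment ℝ x y ⊆ affineSpan ℝ (P ∪ Q) :=
    (AffineSubspace.convex _).segment_subset (affineSpan_mono ℝ Set.subset_union_left hxmem)
      (affineSpan_mono ℝ Set.subset_union_right hymem)
  have ht₀ : 0 ≤ ‖y‖ ^ 2 / (‖x‖ ^ 2 + ‖y‖ ^ 2) := by positivity
  have ht₁ : ‖y‖ ^ 2 / (‖x‖ ^ 2 + ‖y‖ ^ 2) ≤ 1 :=
    div_le_one_of_le₀ (le_add_of_nonneg_left (sq_nonneg _)) (by positivity)
  exact ⟨⟨hz ▸ ⟨_, _, ht₀, sub_nonneg.2 ht₁, add_sub_cancel _ _, rfl⟩,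
    fun w hw => hzmin w (hseg hw)⟩, fun _ => hz⟩

/-- Orthogonal decomposition lemma, part 1: if `P ⊆ A`, `Q ⊆ A^⊥` with `x, y, z` the minimum
norm points of `aff P`, `aff Q`, `aff (P ∪ Q)` respectively, then `z` is the minimum norm point
of the segment `[x, y]`, and if `x ≠ 0` or `y ≠ 0` then `z = λ•x + (1-λ)•y` with
`λ = ‖y‖² / (‖x‖² + ‖y‖²)`. -/
theorem stmt_3 (d : ℕ) (A : Submodule ℝ (EuclideanSpace ℝ (Fin d))) (hA : A ≠ ⊤)
    (P Q : Set (EuclideanSpace ℝ (Fin d)))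
    (hPfin : P.Finite) (hPne : P.Nonempty) (hPA : P ⊆ (A : Set (EuclideanSpace ℝ (Fin d))))
    (hQfin : Q.Finite) (hQne : Q.Nonempty) (hQA : Q ⊆ (Aᗮ : Set (EuclideanSpace ℝ (Fin d))))
    (x y z : EuclideanSpace ℝ (Fin d))
    (hxmem : x ∈ affineSpan ℝ P) (hxmin : ∀ w ∈ affineSpan ℝ P, ‖x‖ ≤ ‖w‖)
    (hymem : y ∈ affineSpan ℝ Q) (hymin : ∀ w ∈ affineSpan ℝ Q, ‖y‖ ≤ ‖w‖)
    (hzmem : z ∈ affineSpan ℝ (P ∪ Q)) (hzmin : ∀ w ∈ affineSpan ℝ (P ∪ Q), ‖z‖ ≤ ‖w‖) :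
    (z ∈ segment ℝ x y ∧ ∀ w ∈ segment ℝ x y, ‖z‖ ≤ ‖w‖) ∧
      ((x ≠ 0 ∨ y ≠ 0) →
        z = (‖y‖ ^ 2 / (‖x‖ ^ 2 + ‖y‖ ^ 2)) • x +
            (1 - ‖y‖ ^ 2 / (‖x‖ ^ 2 + ‖y‖ ^ 2)) • y) :=
  stmt_3_general d A P Q hPA hQA x y z hxmem hxmin hymem hymin hzmem hzmin
end

section
/- Let A ⊆ ℝ^d be a proper linear subspace, let P ⊆ A and Q ⊆ A^⊥ be nonempty finite sets, let x be the minimum norm point of the affine hull of P, let y be the minimum norm point of the affine hull of Q, and let z be the minimum norm point of the affine hull of P ∪ Q. If x ≠ 0 and y ≠ 0, then z is a strict convex combination of x and y, i.e., z = λ·x + (1 − λ)·y for some λ with 0 < λ < 1. -/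
/-!
The minimum norm point of `affineSpan ℝ s` is the unique point `w` of the span whose inner
product `⟪w, a⟫` takes the same value on all `a ∈ s` (the value is then `‖w‖ ^ 2`).
Since `P ⊥ Q`, the point `w = λ x + (1 - λ) y` satisfies `⟪w, a⟫ = λ ‖x‖ ^ 2` for `a ∈ P` and
`⟪w, b⟫ = (1 - λ) ‖y‖ ^ 2` for `b ∈ Q`; choosing `λ = ‖y‖² / (‖x‖² + ‖y‖²)` makes these equal,
so `z = w`.
-/

open RealInnerProductSpace

section MinNormPoint

variable {E : Type*} [NormedAddCommGroup E] [InnerProductSpace ℝ E]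

theorem AffineSubspace.inner_direction_eq_zero_of_norm_le {S : AffineSubspace ℝ E} {z : E}
    (hz : z ∈ S) (hmin : ∀ w ∈ S, ‖z‖ ≤ ‖w‖) {v : E} (hv : v ∈ S.direction) : ⟪z, v⟫ = 0 := by
  have hinf : ‖z - 0‖ = ⨅ w : (S.direction : Set E), ‖z - w‖ := by
    refine le_antisymm (le_ciInf fun w ↦ ?_) ?_
    · rw [sub_zero, sub_eq_neg_add]
      exact hmin _ (S.vadd_mem_of_mem_direction (S.direction.neg_mem w.2) hz)
    · exact ciInf_le ⟨0, by rintro _ ⟨w, rfl⟩; positivity⟩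
        (⟨0, S.direction.zero_mem⟩ : (S.direction : Set E))
  simpa using (S.direction.norm_eq_iInf_iff_real_inner_eq_zero S.direction.zero_mem).1 hinf v hv

theorem inner_eq_norm_sq_of_norm_le_of_mem_affineSpan {s : Set E} {z : E}
    (hz : z ∈ affineSpan ℝ s) (hmin : ∀ w ∈ affineSpan ℝ s, ‖z‖ ≤ ‖w‖) {a : E} (ha : a ∈ s) :
    ⟪z, a⟫ = ‖z‖ ^ 2 := by
  have h := AffineSubspace.inner_direction_eq_zero_of_norm_le hz hmin
    (AffineSubspace.vsub_mem_direction (mem_affineSpan ℝ ha) hz)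
  rwa [vsub_eq_sub, inner_sub_right, real_inner_self_eq_norm_sq, sub_eq_zero] at h

theorem vectorSpan_le_orthogonal_singleton_of_inner_eq {s : Set E} {w : E} {c : ℝ}
    (h : ∀ a ∈ s, ⟪w, a⟫ = c) : vectorSpan ℝ s ≤ (ℝ ∙ w)ᗮ := by
  rw [vectorSpan_def, Submodule.span_le]
  rintro _ ⟨a, ha, b, hb, rfl⟩
  dsimp only
  rw [SetLike.mem_coe, Submodule.mem_orthogonal_singleton_iff_inner_right, vsub_eq_sub,
    inner_sub_right, h a ha, h b hb, sub_self]

theorem eq_of_norm_le_of_inner_eq {s : Set E} {z w : E} {c : ℝ}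
    (hz : z ∈ affineSpan ℝ s) (hmin : ∀ u ∈ affineSpan ℝ s, ‖z‖ ≤ ‖u‖)
    (hw : w ∈ affineSpan ℝ s) (h : ∀ a ∈ s, ⟪w, a⟫ = c) : z = w := by
  have hzw : z - w ∈ vectorSpan ℝ s := by
    rw [← direction_affineSpan]
    exact AffineSubspace.vsub_mem_direction hz hw
  have hz_orth := AffineSubspace.inner_direction_eq_zero_of_norm_le hz hmin
    (by rwa [direction_affineSpan])
  have hw_orth := Submodule.mem_orthogonal_singleton_iff_inner_right.1
    (vectorSpan_le_orthogonal_singleton_of_inner_eq h hzw)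
  rw [← sub_eq_zero, ← inner_self_eq_zero (𝕜 := ℝ), inner_sub_left, hz_orth, hw_orth, sub_zero]

end MinNormPoint

theorem stmt_4_general (d : ℕ) (A : Submodule ℝ (EuclideanSpace ℝ (Fin d)))
    (P Q : Set (EuclideanSpace ℝ (Fin d)))
    (hPA : P ⊆ (A : Set (EuclideanSpace ℝ (Fin d))))
    (hQA : Q ⊆ (Aᗮ : Set (EuclideanSpace ℝ (Fin d))))
    (x y z : EuclideanSpace ℝ (Fin d))
    (hxmem : x ∈ affineSpan ℝ P) (hxmin : ∀ w ∈ affineSpan ℝ P, ‖x‖ ≤ ‖w‖)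
    (hymem : y ∈ affineSpan ℝ Q) (hymin : ∀ w ∈ affineSpan ℝ Q, ‖y‖ ≤ ‖w‖)
    (hzmem : z ∈ affineSpan ℝ (P ∪ Q)) (hzmin : ∀ w ∈ affineSpan ℝ (P ∪ Q), ‖z‖ ≤ ‖w‖)
    (hx0 : x ≠ 0) (hy0 : y ≠ 0) :
    ∃ lam : ℝ, 0 < lam ∧ lam < 1 ∧ z = lam • x + (1 - lam) • y := by
  have hxA : x ∈ A := Submodule.span_le.2 hPA (affineSpan_subset_span hxmem)
  have hyA : y ∈ Aᗮ := Submodule.span_le.2 hQA (affineSpan_subset_span hymem)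
  have hx : 0 < ‖x‖ ^ 2 := by positivity
  have hy : 0 < ‖y‖ ^ 2 := by positivity
  set lam := ‖y‖ ^ 2 / (‖x‖ ^ 2 + ‖y‖ ^ 2) with hlam
  have hbalance : (1 - lam) * ‖y‖ ^ 2 = lam * ‖x‖ ^ 2 := by
    rw [hlam]; field_simp; ring
  have hw : lam • x + (1 - lam) • y ∈ affineSpan ℝ (P ∪ Q) := by
    rw [add_comm, ← AffineMap.lineMap_apply_module]
    exact AffineMap.lineMap_mem _ (affineSpan_mono ℝ Set.subset_union_right hymem)
      (affineSpan_mono ℝ Set.subset_union_left hxmem)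
  refine ⟨lam, by positivity, by rw [hlam, div_lt_one (by positivity)]; linarith,
    eq_of_norm_le_of_inner_eq (c := lam * ‖x‖ ^ 2) hzmem hzmin hw ?_⟩
  rintro a (ha | ha)
  · rw [inner_add_left, real_inner_smul_left, real_inner_smul_left,
      inner_eq_norm_sq_of_norm_le_of_mem_affineSpan hxmem hxmin ha,
      Submodule.inner_left_of_mem_orthogonal (hPA ha) hyA, mul_zero, add_zero]
  · rw [inner_add_left, real_inner_smul_left, real_inner_smul_left,
      inner_eq_norm_sq_of_norm_le_of_mem_affineSpan hymem hymin ha,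
      Submodule.inner_right_of_mem_orthogonal hxA (hQA ha), mul_zero, zero_add, hbalance]

/-- Orthogonal decomposition lemma, part 2: if `P ⊆ A`, `Q ⊆ A^⊥` with `x, y, z` the minimum
norm points of `aff P`, `aff Q`, `aff (P ∪ Q)` respectively, and `x ≠ 0`, `y ≠ 0`, then `z` is
a strict convex combination of `x` and `y`. -/
theorem stmt_4 (d : ℕ) (A : Submodule ℝ (EuclideanSpace ℝ (Fin d))) (hA : A ≠ ⊤)
    (P Q : Set (EuclideanSpace ℝ (Fin d)))
    (hPfin : P.Finite) (hPne : P.Nonempty) (hPA : P ⊆ (A : Set (EuclideanSpace ℝ (Fin d))))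
    (hQfin : Q.Finite) (hQne : Q.Nonempty) (hQA : Q ⊆ (Aᗮ : Set (EuclideanSpace ℝ (Fin d))))
    (x y z : EuclideanSpace ℝ (Fin d))
    (hxmem : x ∈ affineSpan ℝ P) (hxmin : ∀ w ∈ affineSpan ℝ P, ‖x‖ ≤ ‖w‖)
    (hymem : y ∈ affineSpan ℝ Q) (hymin : ∀ w ∈ affineSpan ℝ Q, ‖y‖ ≤ ‖w‖)
    (hzmem : z ∈ affineSpan ℝ (P ∪ Q)) (hzmin : ∀ w ∈ affineSpan ℝ (P ∪ Q), ‖z‖ ≤ ‖w‖)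
    (hx0 : x ≠ 0) (hy0 : y ≠ 0) :
    ∃ lam : ℝ, 0 < lam ∧ lam < 1 ∧ z = lam • x + (1 - lam) • y :=
  stmt_4_general d A P Q hPA hQA x y z hxmem hxmin hymem hymin hzmem hzmin hx0 hy0
end

section
/- Let A ⊆ ℝ^d be a proper linear subspace, let P ⊆ A and Q ⊆ A^⊥ be nonempty finite sets, let x be the minimum norm point of the affine hull of P and y be the minimum norm point of the affine hull of Q. If x ≠ 0, y ≠ 0, and both P and Q are corrals, then P ∪ Q is a corral. -/
open InnerProductSpace
open Set Finset

local notation "⟪" x ", " y "⟫" => @inner ℝ _ _ x y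

section Helpers

/-- The min-norm point of an affine subspace has constant inner product with the subspace. -/
lemma min_inner_eq {E : Type*} [NormedAddCommGroup E] [InnerProductSpace ℝ E]
    {M : AffineSubspace ℝ E} {x : E} (hx : x ∈ M) (hmin : ∀ w ∈ M, ‖x‖ ≤ ‖w‖)
    {w : E} (hw : w ∈ M) : ⟪x, w⟫ = ⟪x, x⟫ := by
  set v := w - x with hv
  have hc : ∀ t : ℝ, 0 ≤ 2 * t * ⟪x, v⟫ + t ^ 2 * ‖v‖ ^ 2 := by
    intro t
    have hz : t • (w -ᵥ x) +ᵥ x ∈ M := M.smul_vsub_vadd_mem t hw hx hx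
    have h1 : ‖x‖ ≤ ‖x + t • v‖ := by
      have := hmin _ hz
      simpa [vsub_eq_sub, vadd_eq_add, add_comm] using this
    have h2 : ‖x‖ ^ 2 ≤ ‖x + t • v‖ ^ 2 := by
      nlinarith [norm_nonneg x, norm_nonneg (x + t • v)]
    have h3 : ‖x + t • v‖ ^ 2 = ‖x‖ ^ 2 + 2 * ⟪x, t • v⟫ + ‖t • v‖ ^ 2 := norm_add_sq_real x (t • v)
    rw [h3, real_inner_smul_right, norm_smul, Real.norm_eq_abs, mul_pow] at h2
    nlinarith [sq_abs t]
  have hv0 : ⟪x, v⟫ = 0 := by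
    by_contra h
    have hn : (0:ℝ) < ‖v‖ ^ 2 + 1 := by positivity
    have hkey := hc (-⟪x, v⟫ / (‖v‖ ^ 2 + 1))
    have h2 : (0:ℝ) < ⟪x, v⟫ ^ 2 := by positivity
    have hne : (‖v‖ ^ 2 + 1) ≠ 0 := ne_of_gt hn
    field_simp at hkey
    nlinarith [sq_nonneg ‖v‖, h2, hn]
  have : ⟪x, w⟫ - ⟪x, x⟫ = 0 := by rw [← inner_sub_right]; exact hv0
  linarith

/-- Uniqueness of the min-norm point of an affine subspace. -/
lemma min_norm_unique {E : Type*} [NormedAddCommGroup E] [InnerProductSpace ℝ E]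
    {M : AffineSubspace ℝ E} {x m : E} (hx : x ∈ M) (hxmin : ∀ w ∈ M, ‖x‖ ≤ ‖w‖)
    (hm : m ∈ M) (hmmin : ∀ w ∈ M, ‖m‖ ≤ ‖w‖) : m = x := by
  have h2 : ⟪x, m⟫ = ⟪x, x⟫ := min_inner_eq hx hxmin hm
  have h1 : ‖x‖ = ‖m‖ := le_antisymm (hxmin _ hm) (hmmin _ hx)
  have h3 : ‖m - x‖ ^ 2 = 0 := by
    have h4 : ‖m - x‖ ^ 2 = ‖m‖ ^ 2 - 2 * ⟪m, x⟫ + ‖x‖ ^ 2 := norm_sub_sq_real m x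
    rw [real_inner_comm] at h4
    have h5 : ⟪x, x⟫ = ‖x‖ ^ 2 := real_inner_self_eq_norm_sq x
    rw [h2, h5, ← h1] at h4
    linarith
  have : m - x = 0 := by
    have := pow_eq_zero_iff (n := 2) (by norm_num) |>.mp h3
    exact norm_eq_zero.mp this
  exact sub_eq_zero.mp this

open Set

lemma intrinsicInterior_subset_interior_of_span_top {V : Type*} [NormedAddCommGroup V]
    [NormedSpace ℝ V] {s : Set V} (h : affineSpan ℝ s = ⊤) :
    intrinsicInterior ℝ s ⊆ interior s := by
  rintro _ ⟨z, hz, rfl⟩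
  have hopen : IsOpen ((affineSpan ℝ s : Set V)) := by
    rw [h]; simp
  have hmap := (hopen.isOpenMap_subtype_val).image_interior_subset
    ((Subtype.val ⁻¹' s : Set (affineSpan ℝ s)))
  have himg : (Subtype.val '' (Subtype.val ⁻¹' s : Set ((affineSpan ℝ s : Set V))) : Set V) = s := by
    rw [Set.image_preimage_eq_inter_range, Subtype.range_val]
    exact Set.inter_eq_left.mpr (subset_affineSpan ℝ s)
  have := hmap ⟨z, hz, rfl⟩
  convert this using 2
  exact himg.symm


lemma affineIndependent_set_iff_finset {V : Type*} [AddCommGroup V] [Module ℝ V] (S : Set V) :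
    AffineIndependent ℝ ((↑) : S → V) ↔
      ∀ (t : Finset V), ↑t ⊆ S → ∀ w : V → ℝ, ∑ e ∈ t, w e = 0 →
        ∑ e ∈ t, w e • e = 0 → ∀ e ∈ t, w e = 0 := by
  classical
  constructor
  · intro h t hts w hw0 hws e het
    rw [affineIndependent_iff] at h
    let emb : {x // x ∈ t} ↪ ↥S :=
      ⟨fun x => ⟨x.1, hts x.2⟩, by
        intro a c h'
        apply Subtype.ext
        simpa using congrArg Subtype.val h'⟩
    have key := h (t.attach.map emb) (fun i => w ↑i) ?_ ?_
    · have := key ⟨e, hts het⟩ (Finset.mem_map.mpr ⟨⟨e, het⟩, Finset.mem_attach _ _, rfl⟩)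
      exact this
    · rw [Finset.sum_map]
      have : ∀ x : {x // x ∈ t}, w ↑(emb x) = w ↑x := fun x => rfl
      rw [Finset.sum_congr rfl fun x _ => this x, Finset.sum_attach t w]
      exact hw0
    · rw [Finset.sum_map]
      have : ∀ x : {x // x ∈ t}, w ↑(emb x) • (↑(emb x) : V) = w ↑x • ↑x := fun x => rfl
      rw [Finset.sum_congr rfl fun x _ => this x, Finset.sum_attach t (fun e => w e • e)]
      exact hws
  · intro h
    rw [affineIndependent_iff]
    intro s w hw0 hws i hi
    set t : Finset V := s.map ⟨Subtype.val, Subtype.coe_injective⟩ with ht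
    have hts : ↑t ⊆ S := by
      intro v hv
      rw [Finset.coe_map] at hv
      obtain ⟨a, _, rfl⟩ := hv
      exact a.2
    set w' : V → ℝ := fun v => if hv : v ∈ S then (if (⟨v, hv⟩ : ↥S) ∈ s then w ⟨v, hv⟩ else 0)
      else 0 with hw'
    have hw'val : ∀ j : ↥S, j ∈ s → w' ↑j = w j := by
      intro j hjs
      rw [hw']
      simp only [dif_pos j.2, Subtype.coe_eta, if_pos hjs]
    have hsum1 : ∑ e ∈ t, w' e = ∑ j ∈ s, w j := by
      rw [ht, Finset.sum_map]
      exact Finset.sum_congr rfl fun j hj => hw'val j hj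
    have hsum2 : ∑ e ∈ t, w' e • e = ∑ j ∈ s, w j • (↑j : V) := by
      rw [ht, Finset.sum_map]
      refine Finset.sum_congr rfl fun j hj => ?_
      show w' ↑j • (↑j : V) = w j • (↑j : V)
      rw [hw'val j hj]
    have hwsum : ∑ e ∈ t, w' e • e = 0 := hsum2.trans hws
    have := h t hts w' (by rw [hsum1]; exact hw0) hwsum ↑i
      (Finset.mem_map.mpr ⟨i, hi, rfl⟩)
    rwa [hw'val i hi] at this


lemma mem_intrinsicInterior_convexHull_iff {V : Type*} [NormedAddCommGroup V] [NormedSpace ℝ V]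
    {S : Set V} (hfin : S.Finite) (hne : S.Nonempty)
    (hind : AffineIndependent ℝ ((↑) : S → V)) (m : V) :
    m ∈ intrinsicInterior ℝ (convexHull ℝ S) ↔
      ∃ w : V → ℝ, (∀ p ∈ S, 0 < w p) ∧ ∑ p ∈ hfin.toFinset, w p = 1 ∧
        ∑ p ∈ hfin.toFinset, w p • p = m := by
  classical
  obtain ⟨p₀, hp₀⟩ := hne
  set W : Submodule ℝ V := vectorSpan ℝ S with hW
  let φ : W →ᵃⁱ[ℝ] V :=
    (AffineIsometryEquiv.constVAdd ℝ V p₀).toAffineIsometry.comp W.subtypeₗᵢ.toAffineIsometry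
  have hφ : ∀ v : W, φ v = p₀ + ↑v := fun v => rfl
  have hinj : Function.Injective ⇑φ := φ.injective
  set S' : Set W := ⇑φ ⁻¹' S with hS'
  have hS'img : ⇑φ '' S' = S := by
    rw [Set.image_preimage_eq_inter_range]
    refine Set.inter_eq_left.mpr ?_
    intro p hp
    refine ⟨⟨p - p₀, vsub_mem_vectorSpan ℝ hp hp₀⟩, ?_⟩
    rw [hφ]
    show p₀ + (p - p₀) = p
    rw [add_comm, sub_add_cancel]
  have hS'fin : S'.Finite := hfin.preimage hinj.injOn
  haveI : Fintype ↥S' := hS'fin.fintype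
  -- index map
  have hidxmem : ∀ (p : V) (hp : p ∈ S), (⟨p - p₀, vsub_mem_vectorSpan ℝ hp hp₀⟩ : W) ∈ S' := by
    intro p hp
    show φ _ ∈ S
    rw [hφ]
    show p₀ + (p - p₀) ∈ S
    rw [add_comm, sub_add_cancel]
    exact hp
  let idx : ∀ p : V, p ∈ S → ↥S' := fun p hp =>
    ⟨⟨p - p₀, vsub_mem_vectorSpan ℝ hp hp₀⟩, hidxmem p hp⟩
  have hidx : ∀ (p : V) (hp : p ∈ S), φ ↑(idx p hp) = p := by
    intro p hp
    rw [hφ]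
    show p₀ + (p - p₀) = p
    rw [add_comm, sub_add_cancel]
  have hmemS : ∀ i : ↥S', φ ↑i ∈ S := fun i => i.2
  have hidx2 : ∀ i : ↥S', idx (φ ↑i) (hmemS i) = i := by
    intro i
    apply Subtype.ext; apply Subtype.ext
    show (φ ↑i : V) - p₀ = ↑↑i
    rw [hφ]
    abel
  -- generic sum transfer
  have hsumR : ∀ F : V → ℝ, ∑ p ∈ hfin.toFinset, F p = ∑ i : ↥S', F (φ ↑i) := by
    intro F
    refine (Finset.sum_bij (fun (i : ↥S') (_ : i ∈ Finset.univ) => φ ↑i) ?_ ?_ ?_ ?_).symm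
    · intro i _; rw [Set.Finite.mem_toFinset]; exact hmemS i
    · intro a _ c _ h; exact Subtype.ext (hinj h)
    · intro p hp
      exact ⟨idx p (hfin.mem_toFinset.mp hp), Finset.mem_univ _,
        hidx p (hfin.mem_toFinset.mp hp)⟩
    · intro i _; rfl
  have hsumV : ∀ F : V → V, ∑ p ∈ hfin.toFinset, F p = ∑ i : ↥S', F (φ ↑i) := by
    intro F
    refine (Finset.sum_bij (fun (i : ↥S') (_ : i ∈ Finset.univ) => φ ↑i) ?_ ?_ ?_ ?_).symm
    · intro i _; rw [Set.Finite.mem_toFinset]; exact hmemS i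
    · intro a _ c _ h; exact Subtype.ext (hinj h)
    · intro p hp
      exact ⟨idx p (hfin.mem_toFinset.mp hp), Finset.mem_univ _,
        hidx p (hfin.mem_toFinset.mp hp)⟩
    · intro i _; rfl
  -- affine independence of S'
  have hind' : AffineIndependent ℝ ((↑) : S' → W) := by
    apply AffineIndependent.of_comp φ.toAffineMap
    have hg : Function.Injective (fun i : ↥S' => (⟨φ ↑i, hmemS i⟩ : ↥S)) := by
      intro a c hac
      apply Subtype.ext; apply hinj
      exact congrArg Subtype.val hac
    exact hind.comp_embedding ⟨_, hg⟩
  -- span top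
  have htop : affineSpan ℝ S' = ⊤ := by
    rw [eq_top_iff]
    intro v _
    have hv : φ v ∈ affineSpan ℝ S := by
      have h1 : (↑v : V) +ᵥ p₀ ∈ affineSpan ℝ S :=
        AffineSubspace.vadd_mem_of_mem_direction
          (by rw [direction_affineSpan]; exact v.2) (mem_affineSpan ℝ hp₀)
      rw [hφ]
      rw [show ((↑v : V) +ᵥ p₀) = p₀ + ↑v by rw [vadd_eq_add, add_comm]] at h1
      exact h1
    have hmapspan : (affineSpan ℝ S').map φ.toAffineMap = affineSpan ℝ S := by
      rw [AffineSubspace.map_span, show ⇑φ.toAffineMap '' S' = S from hS'img]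
    rw [← hmapspan] at hv
    obtain ⟨u, hu, huv⟩ := hv
    have : u = v := hinj huv
    rwa [← this]
  -- affine basis
  let b : AffineBasis ↥S' ℝ W := ⟨(↑), hind', by rw [Subtype.range_coe]; exact htop⟩
  have hbcoe : ⇑b = ((↑) : S' → W) := rfl
  have hInt : interior (convexHull ℝ S') = {z : W | ∀ i : ↥S', 0 < b.coord i z} := by
    have := b.interior_convexHull
    rwa [hbcoe, Subtype.range_coe] at this
  have htopC : affineSpan ℝ (convexHull ℝ S') = ⊤ := by
    rw [affineSpan_convexHull]; exact htop
  have hii : intrinsicInterior ℝ (convexHull ℝ S') = interior (convexHull ℝ S') :=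
    Set.Subset.antisymm (intrinsicInterior_subset_interior_of_span_top htopC)
      interior_subset_intrinsicInterior
  have hlink : intrinsicInterior ℝ (convexHull ℝ S) = ⇑φ '' interior (convexHull ℝ S') := by
    have h1 : ⇑φ '' (convexHull ℝ S') = convexHull ℝ S := by
      rw [show ⇑φ = ⇑φ.toAffineMap from rfl, AffineMap.image_convexHull,
        show ⇑φ.toAffineMap = ⇑φ from rfl, hS'img]
    rw [← h1, AffineIsometry.image_intrinsicInterior, hii]
  constructor
  · intro hm
    rw [hlink] at hm
    obtain ⟨z, hz, rfl⟩ := hm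
    have hpos : ∀ i : ↥S', 0 < b.coord i z := by rw [hInt] at hz; exact hz
    have hsum1 : ∑ i : ↥S', b.coord i z = 1 := b.sum_coord_apply_eq_one z
    have hrep : Finset.univ.affineCombination ℝ ⇑b (fun i => b.coord i z) = z :=
      b.affineCombination_coord_eq_self z
    set w : V → ℝ := fun p => if hp : p ∈ S then b.coord (idx p hp) z else 0 with hwdef
    have hwS : ∀ (p : V) (hp : p ∈ S), w p = b.coord (idx p hp) z := by
      intro p hp; rw [hwdef]; simp only [dif_pos hp]
    have hwi : ∀ i : ↥S', w (φ ↑i) = b.coord i z := by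
      intro i; rw [hwS _ (hmemS i), hidx2]
    refine ⟨w, ?_, ?_, ?_⟩
    · intro p hp; rw [hwS p hp]; exact hpos _
    · rw [hsumR w, Finset.sum_congr rfl fun i _ => hwi i]; exact hsum1
    · rw [hsumV (fun p => w p • p)]
      have he : ∀ i : ↥S', w (φ ↑i) • (φ ↑i : V) = b.coord i z • (φ ↑i : V) := by
        intro i; rw [hwi]
      rw [Finset.sum_congr rfl fun i _ => he i]
      have hmap := Finset.map_affineCombination Finset.univ ⇑b (fun i => b.coord i z) hsum1
        φ.toAffineMap
      rw [hrep] at hmap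
      rw [Finset.affineCombination_eq_linear_combination _ _ _ hsum1] at hmap
      exact hmap.symm
  · rintro ⟨w, hwpos, hw1, hwm⟩
    have hw'1 : ∑ i : ↥S', w (φ ↑i) = 1 := by rw [← hsumR w]; exact hw1
    set z : W := Finset.univ.affineCombination ℝ ⇑b (fun i => w (φ ↑i)) with hz
    have hcoord : ∀ i, b.coord i z = w (φ ↑i) := fun i =>
      b.coord_apply_combination_of_mem (Finset.mem_univ i) hw'1
    have hzin : z ∈ interior (convexHull ℝ S') := by
      rw [hInt]
      intro i
      rw [hcoord]
      exact hwpos _ (hmemS i)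
    have hφz : φ z = m := by
      have hmap := Finset.map_affineCombination Finset.univ ⇑b (fun i => w (φ ↑i)) hw'1
        φ.toAffineMap
      rw [Finset.affineCombination_eq_linear_combination Finset.univ (⇑φ.toAffineMap ∘ ⇑b) _
        hw'1] at hmap
      rw [← hwm, hsumV (fun p => w p • p)]
      exact hmap
    rw [hlink]
    exact ⟨z, hzin, hφz⟩

end Helpers

/-- A finite set `S` of affinely independent points is a *corral* if the point of minimum
Euclidean norm in the affine hull of `S` (the affine minimizer) lies in the relative interior
of the convex hull of `S`. -/
def IsCorral {d : ℕ} (S : Set (EuclideanSpace ℝ (Fin d))) : Prop :=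
  S.Finite ∧ AffineIndependent ℝ ((↑) : S → EuclideanSpace ℝ (Fin d)) ∧
    ∃ m : EuclideanSpace ℝ (Fin d), m ∈ affineSpan ℝ S ∧
      (∀ w ∈ affineSpan ℝ S, ‖m‖ ≤ ‖w‖) ∧
      m ∈ intrinsicInterior ℝ (convexHull ℝ S)

/-- Orthogonal decomposition lemma, part 3: if `P ⊆ A`, `Q ⊆ A^⊥` are corrals with nonzero
affine minimizers `x` and `y`, then `P ∪ Q` is a corral. -/
theorem stmt_5 (d : ℕ) (A : Submodule ℝ (EuclideanSpace ℝ (Fin d))) (hA : A ≠ ⊤)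
    (P Q : Set (EuclideanSpace ℝ (Fin d)))
    (hPfin : P.Finite) (hPne : P.Nonempty) (hPA : P ⊆ (A : Set (EuclideanSpace ℝ (Fin d))))
    (hQfin : Q.Finite) (hQne : Q.Nonempty) (hQA : Q ⊆ (Aᗮ : Set (EuclideanSpace ℝ (Fin d))))
    (x y : EuclideanSpace ℝ (Fin d))
    (hxmem : x ∈ affineSpan ℝ P) (hxmin : ∀ w ∈ affineSpan ℝ P, ‖x‖ ≤ ‖w‖)
    (hymem : y ∈ affineSpan ℝ Q) (hymin : ∀ w ∈ affineSpan ℝ Q, ‖y‖ ≤ ‖w‖)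
    (hx0 : x ≠ 0) (hy0 : y ≠ 0)
    (hPc : IsCorral P) (hQc : IsCorral Q) :
    IsCorral (P ∪ Q) := by
  classical
  obtain ⟨-, hPind, mP, hmPmem, hmPmin, hmPint⟩ := hPc
  obtain ⟨-, hQind, mQ, hmQmem, hmQmin, hmQint⟩ := hQc
  have hmPx : mP = x := min_norm_unique hxmem hxmin hmPmem hmPmin
  have hmQy : mQ = y := min_norm_unique hymem hymin hmQmem hmQmin
  have hxint : x ∈ intrinsicInterior ℝ (convexHull ℝ P) := hmPx ▸ hmPint
  have hyint : y ∈ intrinsicInterior ℝ (convexHull ℝ Q) := hmQy ▸ hmQint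
  -- memberships in A and Aᗮ
  have hPA' : affineSpan ℝ P ≤ A.toAffineSubspace :=
    affineSpan_le.mpr (fun p hp => Submodule.mem_toAffineSubspace.mpr (hPA hp))
  have hQA' : affineSpan ℝ Q ≤ Aᗮ.toAffineSubspace :=
    affineSpan_le.mpr (fun q hq => Submodule.mem_toAffineSubspace.mpr (hQA hq))
  have hxA : x ∈ A := Submodule.mem_toAffineSubspace.mp (hPA' hxmem)
  have hyA : y ∈ Aᗮ := Submodule.mem_toAffineSubspace.mp (hQA' hymem)
  -- basic inner-product facts
  have hxspan : ∀ w ∈ affineSpan ℝ P, ⟪x, w⟫ = ⟪x, x⟫ := fun w hw => min_inner_eq hxmem hxmin hw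
  have hyspan : ∀ w ∈ affineSpan ℝ Q, ⟪y, w⟫ = ⟪y, y⟫ := fun w hw => min_inner_eq hymem hymin hw
  have h0P : (0 : EuclideanSpace ℝ (Fin d)) ∉ affineSpan ℝ P := by
    intro h0
    exact hx0 (norm_le_zero_iff.mp (by simpa using hxmin 0 h0))
  have h0Q : (0 : EuclideanSpace ℝ (Fin d)) ∉ affineSpan ℝ Q := by
    intro h0
    exact hy0 (norm_le_zero_iff.mp (by simpa using hymin 0 h0))
  have hdisj : ∀ p, p ∈ P → p ∈ Q → False := by
    intro p hpP hpQ
    have hinner : ⟪p, p⟫ = 0 :=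
      Submodule.inner_right_of_mem_orthogonal (hPA hpP) (hQA hpQ)
    have hp0 : p = 0 := inner_self_eq_zero.mp hinner
    exact h0P (hp0 ▸ subset_affineSpan ℝ P hpP)
  -- constants
  set X : ℝ := ‖x‖ ^ 2 with hXdef
  set Y : ℝ := ‖y‖ ^ 2 with hYdef
  have hX : 0 < X := by rw [hXdef]; exact pow_pos (norm_pos_iff.mpr hx0) 2
  have hY : 0 < Y := by rw [hYdef]; exact pow_pos (norm_pos_iff.mpr hy0) 2
  have hXY : 0 < X + Y := by linarith
  have hXYne : X + Y ≠ 0 := ne_of_gt hXY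
  set s : ℝ := Y / (X + Y) with hsdef
  have hs0 : 0 < s := by rw [hsdef]; positivity
  have hs1 : s < 1 := by rw [hsdef, div_lt_one hXY]; linarith
  set m : EuclideanSpace ℝ (Fin d) := s • x + (1 - s) • y with hmdef
  set K : ℝ := X * Y / (X + Y) with hKdef
  have hxx : ⟪x, x⟫ = X := real_inner_self_eq_norm_sq x
  have hyy : ⟪y, y⟫ = Y := real_inner_self_eq_norm_sq y
  -- inner products of m with points of P ∪ Q
  have hinP : ∀ p ∈ P, ⟪m, p⟫ = K := by
    intro p hp
    have h1 : ⟪x, p⟫ = X := (hxspan p (subset_affineSpan ℝ P hp)).trans hxx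
    have h2 : ⟪y, p⟫ = 0 := by
      rw [real_inner_comm]
      exact Submodule.inner_right_of_mem_orthogonal (hPA hp) hyA
    rw [hmdef, inner_add_left, real_inner_smul_left, real_inner_smul_left, h1, h2, hsdef, hKdef]
    field_simp
    ring
  have hinQ : ∀ q ∈ Q, ⟪m, q⟫ = K := by
    intro q hq
    have h1 : ⟪y, q⟫ = Y := (hyspan q (subset_affineSpan ℝ Q hq)).trans hyy
    have h2 : ⟪x, q⟫ = 0 := Submodule.inner_right_of_mem_orthogonal hxA (hQA hq)
    rw [hmdef, inner_add_left, real_inner_smul_left, real_inner_smul_left, h1, h2, hsdef, hKdef]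
    field_simp
    ring
  have hinspan : ∀ w ∈ affineSpan ℝ (P ∪ Q), ⟪m, w⟫ = K := by
    intro w hw
    refine affineSpan_induction (p := fun v => ⟪m, v⟫ = K) hw ?_ ?_
    · intro v hv
      rcases hv with hv | hv
      · exact hinP v hv
      · exact hinQ v hv
    · intro c u v w' hu hv hw'
      rw [vadd_eq_add, vsub_eq_sub, inner_add_right, real_inner_smul_right, inner_sub_right,
        hu, hv, hw']
      ring
  have hxU : x ∈ affineSpan ℝ (P ∪ Q) := affineSpan_mono ℝ Set.subset_union_left hxmem
  have hyU : y ∈ affineSpan ℝ (P ∪ Q) := affineSpan_mono ℝ Set.subset_union_right hymem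
  have hmmem : m ∈ affineSpan ℝ (P ∪ Q) := by
    have h1 := AffineSubspace.smul_vsub_vadd_mem (affineSpan ℝ (P ∪ Q)) s hxU hyU hyU
    have h2 : s • (x -ᵥ y) +ᵥ y = m := by
      rw [vsub_eq_sub, vadd_eq_add, hmdef]
      module
    rwa [h2] at h1
  have hmm : ⟪m, m⟫ = K := hinspan m hmmem
  have hmmin : ∀ w ∈ affineSpan ℝ (P ∪ Q), ‖m‖ ≤ ‖w‖ := by
    intro w hw
    have h2 : ⟪m, w - m⟫ = 0 := by rw [inner_sub_right, hinspan w hw, hmm]; ring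
    have h3 : ‖m + (w - m)‖ ^ 2 = ‖m‖ ^ 2 + 2 * ⟪m, w - m⟫ + ‖w - m‖ ^ 2 :=
      norm_add_sq_real m (w - m)
    have h4 : m + (w - m) = w := by abel
    rw [h4, h2] at h3
    refine le_of_pow_le_pow_left₀ (n := 2) (by norm_num) (norm_nonneg w) ?_
    nlinarith [sq_nonneg ‖w - m‖]
  -- affine independence of the union
  have hPiff := (affineIndependent_set_iff_finset P).mp hPind
  have hQiff := (affineIndependent_set_iff_finset Q).mp hQind
  have hindU : AffineIndependent ℝ ((↑) : ↥(P ∪ Q) → EuclideanSpace ℝ (Fin d)) := by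
    rw [affineIndependent_set_iff_finset]
    intro t hts w hw0 hws e het
    set tP := t.filter (· ∈ P) with htPdef
    set tQ := t.filter (· ∉ P) with htQdef
    have htsplit : tP ∪ tQ = t := Finset.filter_union_filter_not_eq _ t
    have hdisjf : Disjoint tP tQ := Finset.disjoint_filter_filter_not t t _
    have htPP : ↑tP ⊆ P := by
      intro v hv
      exact (Finset.mem_filter.mp hv).2
    have htQQ : ↑tQ ⊆ Q := by
      intro v hv
      obtain ⟨hvt, hvnP⟩ := Finset.mem_filter.mp hv
      rcases hts hvt with h | h
      · exact absurd h hvnP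
      · exact h
    have hsum0 : ∑ e ∈ tP, w e + ∑ e ∈ tQ, w e = 0 := by
      rw [← Finset.sum_union hdisjf, htsplit]; exact hw0
    have hvec0 : (∑ e ∈ tP, w e • e) + (∑ e ∈ tQ, w e • e) = 0 := by
      rw [← Finset.sum_union hdisjf, htsplit]; exact hws
    have huA : (∑ e ∈ tP, w e • e) ∈ A :=
      Submodule.sum_mem A (fun e he => A.smul_mem _ (hPA (htPP he)))
    have hvA : (∑ e ∈ tQ, w e • e) ∈ Aᗮ :=
      Submodule.sum_mem Aᗮ (fun e he => Aᗮ.smul_mem _ (hQA (htQQ he)))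
    have hu0 : (∑ e ∈ tP, w e • e) = 0 := by
      have huneg : (∑ e ∈ tP, w e • e) = -(∑ e ∈ tQ, w e • e) :=
        eq_neg_of_add_eq_zero_left hvec0
      have huA' : (∑ e ∈ tP, w e • e) ∈ Aᗮ := huneg ▸ Aᗮ.neg_mem hvA
      exact inner_self_eq_zero.mp (Submodule.inner_right_of_mem_orthogonal huA huA')
    have hv0 : (∑ e ∈ tQ, w e • e) = 0 := by
      have h := hvec0
      rw [hu0, zero_add] at h
      exact h
    by_cases ha : (∑ e ∈ tP, w e) = 0
    · have hwP : ∀ e ∈ tP, w e = 0 := hPiff tP htPP w ha hu0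
      have haQ : ∑ e ∈ tQ, w e = 0 := by linarith [hsum0, ha]
      have hwQ : ∀ e ∈ tQ, w e = 0 := hQiff tQ htQQ w haQ hv0
      rcases Finset.mem_union.mp (htsplit ▸ het : e ∈ tP ∪ tQ) with h | h
      · exact hwP e h
      · exact hwQ e h
    · exfalso
      -- 0 is then an affine combination of points of P
      have hsum1 : ∑ i : ↥tP, w ↑i / (∑ e ∈ tP, w e) = 1 := by
        rw [← Finset.sum_div, Finset.sum_coe_sort tP w, div_self ha]
      have hz := affineCombination_mem_affineSpan (k := ℝ) hsum1
        (fun i : ↥tP => (↑i : EuclideanSpace ℝ (Fin d)))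
      rw [Finset.affineCombination_eq_linear_combination _ _ _ hsum1] at hz
      have hzval : ∑ i : ↥tP, (w ↑i / (∑ e ∈ tP, w e)) • (↑i : EuclideanSpace ℝ (Fin d)) = 0 := by
        have h1 : ∑ i : ↥tP, (w ↑i / (∑ e ∈ tP, w e)) • (↑i : EuclideanSpace ℝ (Fin d))
            = (∑ e ∈ tP, w e)⁻¹ • ∑ i : ↥tP, w ↑i • (↑i : EuclideanSpace ℝ (Fin d)) := by
          rw [Finset.smul_sum]
          refine Finset.sum_congr rfl fun i _ => ?_
          rw [smul_smul, div_eq_inv_mul]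
        have h2 : ∑ i : ↥tP, w ↑i • (↑i : EuclideanSpace ℝ (Fin d)) = ∑ e ∈ tP, w e • e :=
          Finset.sum_coe_sort tP (fun e => w e • e)
        rw [h1, h2, hu0, smul_zero]
      rw [hzval] at hz
      have hrange : Set.range (fun i : ↥tP => (↑i : EuclideanSpace ℝ (Fin d))) ⊆ P := by
        rintro _ ⟨i, rfl⟩
        exact htPP i.2
      have : (0 : EuclideanSpace ℝ (Fin d)) ∈ affineSpan ℝ P :=
        affineSpan_mono ℝ hrange hz
      exact h0P this
  -- positive-weight representations of x and y
  obtain ⟨wP, hwPpos, hwP1, hwPx⟩ :=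
    (mem_intrinsicInterior_convexHull_iff hPfin hPne hPind x).mp hxint
  obtain ⟨wQ, hwQpos, hwQ1, hwQy⟩ :=
    (mem_intrinsicInterior_convexHull_iff hQfin hQne hQind y).mp hyint
  have hUfin : (P ∪ Q).Finite := hPfin.union hQfin
  have hUne : (P ∪ Q).Nonempty := hPne.mono Set.subset_union_left
  refine ⟨hUfin, hindU, m, hmmem, hmmin, ?_⟩
  rw [mem_intrinsicInterior_convexHull_iff hUfin hUne hindU m]
  set w : EuclideanSpace ℝ (Fin d) → ℝ := fun v =>
    s * (if v ∈ P then wP v else 0) + (1 - s) * (if v ∈ Q then wQ v else 0) with hwdef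
  have hwP' : ∀ v ∈ P, w v = s * wP v := by
    intro v hv
    have hvQ : v ∉ Q := fun h => hdisj v hv h
    rw [hwdef]
    simp [hv, hvQ]
  have hwQ' : ∀ v ∈ Q, w v = (1 - s) * wQ v := by
    intro v hv
    have hvP : v ∉ P := fun h => hdisj v h hv
    rw [hwdef]
    simp [hv, hvP]
  have hUtoF : hUfin.toFinset = hPfin.toFinset ∪ hQfin.toFinset :=
    Set.Finite.toFinset_union hPfin hQfin hUfin
  have hdF : Disjoint hPfin.toFinset hQfin.toFinset :=
    Finset.disjoint_left.mpr fun a haP haQ =>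
      hdisj a (hPfin.mem_toFinset.mp haP) (hQfin.mem_toFinset.mp haQ)
  refine ⟨w, ?_, ?_, ?_⟩
  · intro p hp
    rcases hp with hp | hp
    · rw [hwP' p hp]; exact mul_pos hs0 (hwPpos p hp)
    · rw [hwQ' p hp]; exact mul_pos (by linarith) (hwQpos p hp)
  · rw [hUtoF, Finset.sum_union hdF]
    have h1 : ∑ p ∈ hPfin.toFinset, w p = s := by
      rw [Finset.sum_congr rfl fun p hp => hwP' p (hPfin.mem_toFinset.mp hp), ← Finset.mul_sum,
        hwP1, mul_one]
    have h2 : ∑ p ∈ hQfin.toFinset, w p = 1 - s := by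
      rw [Finset.sum_congr rfl fun p hp => hwQ' p (hQfin.mem_toFinset.mp hp), ← Finset.mul_sum,
        hwQ1, mul_one]
    rw [h1, h2]; ring
  · rw [hUtoF, Finset.sum_union hdF]
    have h1 : ∑ p ∈ hPfin.toFinset, w p • p = s • x := by
      rw [Finset.sum_congr rfl fun p hp => by
        rw [hwP' p (hPfin.mem_toFinset.mp hp), mul_smul]]
      rw [← Finset.smul_sum, hwPx]
    have h2 : ∑ p ∈ hQfin.toFinset, w p • p = (1 - s) • y := by
      rw [Finset.sum_congr rfl fun p hp => by
        rw [hwQ' p (hQfin.mem_toFinset.mp hp), mul_smul]]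
      rw [← Finset.smul_sum, hwQy]
    rw [h1, h2, hmdef]
end

section
/- Let P ⊆ ℝ^d be a finite set of points that is a corral and let x be the minimum norm point of the affine hull of P. Let q be a point in the linear span of {x} together with the orthogonal complement of the linear span of P, and assume ⟨q, x⟩ < min{‖q‖², ‖x‖²}. Then P ∪ {q} is a corral, and the point of minimum Euclidean norm in conv(P ∪ {q}) is y = λ·x + (1 − λ)·q with λ = ⟨q, q − x⟩ / ‖q − x‖², which is a strict convex combination of x and q (0 < λ < 1). -/
/-!
The minimizer `x` of `aff P` is characterised by `⟪x, w⟫ = ‖x‖²` for all `w ∈ aff P`, i.e. `x` is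
orthogonal to the direction of `aff P`; the hypothesis on `q` makes `q` orthogonal to that
direction too. The point `y = λ x + (1 - λ) q` is the foot of the perpendicular from `0` to the
line through `x` and `q`, so `⟪y, ·⟫` is constant on `P ∪ {q}`, hence on its affine hull, and `y`
is the affine minimizer of `P ∪ {q}`. The hypothesis `⟪q, x⟫ < min ‖q‖² ‖x‖²` puts `λ` in `(0, 1)`,
and as `x` has positive barycentric coordinates in `P` and `q ∉ aff P`, the barycentric
coordinates of `y` in `P ∪ {q}` are positive as well.
-/

open InnerProductSpace

open Set

theorem intrinsicInterior_eq_interior_of_affineSpan_eq_top {E : Type*} [NormedAddCommGroup E]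
    [NormedSpace ℝ E] {s : Set E} (h : affineSpan ℝ s = ⊤) :
    intrinsicInterior ℝ s = interior s := by
  refine subset_antisymm ?_ interior_subset_intrinsicInterior
  have hopen : IsOpen (affineSpan ℝ s : Set E) := by rw [h]; exact isOpen_univ
  rintro _ ⟨z, hz, rfl⟩
  exact interior_mono (image_preimage_subset _ _)
    (hopen.isOpenEmbedding_subtypeVal.isOpenMap.image_interior_subset _ ⟨z, hz, rfl⟩)

theorem AffineBasis.intrinsicInterior_convexHull {ι E : Type*} [Finite ι] [NormedAddCommGroup E]
    [NormedSpace ℝ E] (b : AffineBasis ι ℝ E) :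
    intrinsicInterior ℝ (convexHull ℝ (range b)) = {x | ∀ i, 0 < b.coord i x} := by
  rw [intrinsicInterior_eq_interior_of_affineSpan_eq_top (by rw [affineSpan_convexHull, b.tot]),
    b.interior_convexHull]

theorem AffineIndependent.exists_affineBasis_comp_eq {ι E : Type*} [Nonempty ι]
    [NormedAddCommGroup E] [NormedSpace ℝ E] {p : ι → E} (hp : AffineIndependent ℝ p) :
    ∃ (V : Submodule ℝ E) (B : AffineBasis ι ℝ V) (φ : V →ᵃⁱ[ℝ] E), φ ∘ B = p := by
  obtain ⟨i₀⟩ := ‹Nonempty ι›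
  let V := Submodule.span ℝ (range fun i => p i - p i₀)
  let φ : V →ᵃⁱ[ℝ] E :=
    (AffineIsometryEquiv.vaddConst ℝ (p i₀)).toAffineIsometry.comp V.subtypeₗᵢ.toAffineIsometry
  let b : ι → V := fun i => ⟨p i - p i₀, Submodule.subset_span ⟨i, rfl⟩⟩
  have hφb : φ ∘ b = p := funext fun i => by simp [φ, b]
  have hb_span : affineSpan ℝ (range b) = ⊤ := by
    have h0 : insert 0 (range b) = range b :=
      insert_eq_of_mem ⟨i₀, Subtype.ext (sub_self _)⟩
    have hrange : range b = (↑) ⁻¹' range fun i => p i - p i₀ := by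
      ext v
      exact ⟨by rintro ⟨i, rfl⟩; exact ⟨i, rfl⟩, fun ⟨i, hi⟩ => ⟨i, Subtype.ext hi⟩⟩
    rw [← AffineSubspace.coe_eq_univ_iff, ← h0, affineSpan_insert_zero, hrange,
      Submodule.span_span_coe_preimage, Submodule.top_coe]
  exact ⟨V, ⟨b, AffineIndependent.of_comp φ.toAffineMap (hφb ▸ hp), hb_span⟩, φ, hφb⟩

theorem AffineIndependent.mem_intrinsicInterior_convexHull_iff {ι E : Type*} [Fintype ι]
    [NormedAddCommGroup E] [NormedSpace ℝ E] {p : ι → E} (hp : AffineIndependent ℝ p) {y : E} :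
    y ∈ intrinsicInterior ℝ (convexHull ℝ (range p)) ↔
      ∃ w : ι → ℝ, (∀ i, 0 < w i) ∧ ∑ i, w i = 1 ∧ ∑ i, w i • p i = y := by
  cases isEmpty_or_nonempty ι
  · simp [range_eq_empty]
  obtain ⟨V, B, φ, rfl⟩ := hp.exists_affineBasis_comp_eq
  have hφsum : ∀ w : ι → ℝ, ∑ i, w i = 1 → φ (∑ i, w i • B i) = ∑ i, w i • φ (B i) := by
    intro w hw
    rw [← Finset.affineCombination_eq_linear_combination _ _ _ hw,
      ← Finset.affineCombination_eq_linear_combination _ _ _ hw]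
    exact Finset.univ.map_affineCombination B w hw φ.toAffineMap
  rw [range_comp, ← φ.coe_toAffineMap, ← AffineMap.image_convexHull, φ.coe_toAffineMap,
    AffineIsometry.intrinsicInterior_image, B.intrinsicInterior_convexHull]
  constructor
  · rintro ⟨z, hz, rfl⟩
    refine ⟨fun i => B.coord i z, hz, B.sum_coord_apply_eq_one z, ?_⟩
    have := hφsum _ (B.sum_coord_apply_eq_one z)
    rw [B.linear_combination_coord_eq_self] at this
    exact this.symm
  · rintro ⟨w, hw, hw1, rfl⟩
    refine ⟨∑ i, w i • B i, fun i => ?_, hφsum w hw1⟩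
    rw [← Finset.affineCombination_eq_linear_combination _ _ _ hw1,
      B.coord_apply_combination_of_mem (Finset.mem_univ i) hw1]
    exact hw i

theorem Finset.mem_intrinsicInterior_convexHull_iff {E : Type*} [NormedAddCommGroup E]
    [NormedSpace ℝ E] {s : Finset E} (hs : AffineIndependent ℝ ((↑) : ↥(s : Set E) → E))
    {y : E} :
    y ∈ intrinsicInterior ℝ (convexHull ℝ (s : Set E)) ↔
      ∃ w : E → ℝ, (∀ z ∈ s, 0 < w z) ∧ ∑ z ∈ s, w z = 1 ∧ ∑ z ∈ s, w z • z = y := by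
  classical
  conv_lhs => rw [← Subtype.range_coe (s := (s : Set E))]
  rw [hs.mem_intrinsicInterior_convexHull_iff]
  constructor
  · rintro ⟨w, hw, hw1, rfl⟩
    refine ⟨fun z => if h : z ∈ s then w ⟨z, h⟩ else 0, fun z hz => by simpa [hz] using hw ⟨z, hz⟩,
      ?_, ?_⟩
    · rw [← hw1, ← Finset.sum_coe_sort s]
      exact Finset.sum_congr rfl fun z _ => dif_pos z.2
    · rw [← Finset.sum_coe_sort s]
      exact Finset.sum_congr rfl fun z _ => by dsimp only; rw [dif_pos z.2]; rfl
  · rintro ⟨w, hw, hw1, rfl⟩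
    exact ⟨fun z => w z, fun z => hw z z.2, by rwa [← Finset.sum_coe_sort s] at hw1,
      Finset.sum_coe_sort s fun z => w z • z⟩

theorem AffineIndependent.insert_of_notMem_affineSpan {k V P : Type*} [DivisionRing k]
    [AddCommGroup V] [Module k V] [AddTorsor V P] {s : Set P} {p : P}
    (hs : AffineIndependent k ((↑) : s → P)) (hp : p ∉ affineSpan k s) :
    AffineIndependent k ((↑) : ↥(insert p s) → P) := by
  set i : ↥(insert p s) := ⟨p, mem_insert p s⟩
  have hmem : ∀ z : ↥(insert p s), z ≠ i → (z : P) ∈ s := fun z hz =>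
    mem_of_mem_insert_of_ne z.2 fun h => hz (Subtype.ext h)
  refine AffineIndependent.affineIndependent_of_notMem_span (i := i) ?_ ?_
  · exact hs.comp_embedding ⟨fun z : {z // z ≠ i} => ⟨z.1, hmem z.1 z.2⟩, fun a b h => by
      simpa [Subtype.ext_iff] using h⟩
  · refine fun h => hp (affineSpan_mono k ?_ h)
    rintro _ ⟨z, hz, rfl⟩
    exact hmem z hz

variable {E : Type*} [NormedAddCommGroup E] [InnerProductSpace ℝ E]

theorem AffineSubspace.forall_norm_le_iff_forall_inner_eq {A : AffineSubspace ℝ E} {x : E}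
    (hx : x ∈ A) : (∀ w ∈ A, ‖x‖ ≤ ‖w‖) ↔ ∀ w ∈ A, ⟪x, w⟫_ℝ = ‖x‖ ^ 2 := by
  constructor
  · intro hmin w hw
    have hquad : ∀ t : ℝ, 0 ≤ ‖w - x‖ ^ 2 * (t * t) + 2 * ⟪x, w - x⟫_ℝ * t + 0 := fun t => by
      have h := hmin _ (A.smul_vsub_vadd_mem t hw hx hx)
      rw [vsub_eq_sub, vadd_eq_add, ← sq_le_sq₀ (norm_nonneg _) (norm_nonneg _),
        add_comm, norm_add_sq_real, norm_smul, real_inner_smul_right, mul_pow,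
        Real.norm_eq_abs, sq_abs] at h
      linarith
    have h0 : ⟪x, w - x⟫_ℝ = 0 := by
      have := discrim_le_zero hquad
      rw [discrim] at this
      nlinarith [sq_nonneg ⟪x, w - x⟫_ℝ]
    rw [inner_sub_right, real_inner_self_eq_norm_sq] at h0
    linarith
  · intro hinner w hw
    rcases (norm_nonneg x).eq_or_lt with h | h
    · rw [← h]; exact norm_nonneg w
    · refine le_of_mul_le_mul_left ?_ h
      rw [← sq, ← hinner w hw]
      exact real_inner_le_norm x w

theorem AffineSubspace.eq_of_forall_norm_le {A : AffineSubspace ℝ E} {x y : E} (hx : x ∈ A)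
    (hy : y ∈ A) (hxmin : ∀ w ∈ A, ‖x‖ ≤ ‖w‖) (hymin : ∀ w ∈ A, ‖y‖ ≤ ‖w‖) : x = y := by
  have hxy := (forall_norm_le_iff_forall_inner_eq hx).1 hxmin y hy
  have hyx := (forall_norm_le_iff_forall_inner_eq hy).1 hymin x hx
  rw [real_inner_comm] at hyx
  rw [← sub_eq_zero, ← norm_eq_zero, ← sq_eq_zero_iff, norm_sub_sq_real]
  linarith

theorem inner_eq_of_mem_affineSpan {s : Set E} {y : E} {c : ℝ} (h : ∀ z ∈ s, ⟪y, z⟫_ℝ = c)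
    {z : E} (hz : z ∈ affineSpan ℝ s) : ⟪y, z⟫_ℝ = c := by
  induction hz using affineSpan_induction' with
  | mem z hz => exact h z hz
  | smul_vsub_vadd t u _ v _ w _ hu hv hw =>
    rw [vsub_eq_sub, vadd_eq_add, inner_add_right, real_inner_smul_right, inner_sub_right, hu, hv,
      hw]
    ring

theorem inner_eq_zero_of_mem_sup_orthogonal {K : Submodule ℝ E} {x q u : E}
    (hq : q ∈ Submodule.span ℝ {x} ⊔ Kᗮ) (hu : u ∈ K) (hxu : ⟪x, u⟫_ℝ = 0) : ⟪q, u⟫_ℝ = 0 := by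
  suffices Submodule.span ℝ {x} ⊔ Kᗮ ≤ (Submodule.span ℝ {u})ᗮ from
    Submodule.mem_orthogonal_singleton_iff_inner_left.1 (this hq)
  refine sup_le ?_ (Submodule.orthogonal_le ((Submodule.span_singleton_le_iff_mem u K).2 hu))
  rw [Submodule.span_singleton_le_iff_mem, Submodule.mem_orthogonal_singleton_iff_inner_left]
  exact hxu

theorem inner_eq_inner_of_mem_span_sup_orthogonal {s : Set E} {x y z : E}
    (hxs : x ∈ affineSpan ℝ s) (hx : ∀ w ∈ affineSpan ℝ s, ⟪x, w⟫_ℝ = ‖x‖ ^ 2)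
    (hy : y ∈ Submodule.span ℝ {x} ⊔ (Submodule.span ℝ s)ᗮ) (hz : z ∈ s) :
    ⟪y, z⟫_ℝ = ⟪y, x⟫_ℝ := by
  have hx_perp : ⟪x, z - x⟫_ℝ = 0 := by
    rw [inner_sub_right, hx z (subset_affineSpan ℝ _ hz), real_inner_self_eq_norm_sq, sub_self]
  have := inner_eq_zero_of_mem_sup_orthogonal hy
    (sub_mem (Submodule.subset_span hz) (affineSpan_subset_span hxs)) hx_perp
  rwa [inner_sub_right, sub_eq_zero] at this

theorem inner_smul_add_smul_sub_eq_zero {a b : E} (hab : a ≠ b) :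
    ⟪(⟪b, b - a⟫_ℝ / ‖b - a‖ ^ 2) • a + (1 - ⟪b, b - a⟫_ℝ / ‖b - a‖ ^ 2) • b, b - a⟫_ℝ = 0 := by
  have hne : ‖b - a‖ ^ 2 ≠ 0 := by simpa [sub_eq_zero] using hab.symm
  have hsplit : (⟪b, b - a⟫_ℝ / ‖b - a‖ ^ 2) • a + (1 - ⟪b, b - a⟫_ℝ / ‖b - a‖ ^ 2) • b
      = b - (⟪b, b - a⟫_ℝ / ‖b - a‖ ^ 2) • (b - a) := by
    rw [smul_sub, sub_smul, one_smul]; abel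
  rw [hsplit, inner_sub_left, real_inner_smul_left, real_inner_self_eq_norm_sq,
    div_mul_cancel₀ _ hne, sub_self]

theorem inner_sub_div_norm_sub_sq_mem_Ioo {a b : E} (h : ⟪b, a⟫_ℝ < min (‖b‖ ^ 2) (‖a‖ ^ 2)) :
    ⟪b, b - a⟫_ℝ / ‖b - a‖ ^ 2 ∈ Ioo 0 1 := by
  obtain ⟨hb, ha⟩ := lt_min_iff.1 h
  have hnum : ⟪b, b - a⟫_ℝ = ‖b‖ ^ 2 - ⟪b, a⟫_ℝ := by
    rw [inner_sub_right, real_inner_self_eq_norm_sq]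
  have hden : ‖b - a‖ ^ 2 = ‖b‖ ^ 2 - 2 * ⟪b, a⟫_ℝ + ‖a‖ ^ 2 := norm_sub_sq_real b a
  have hpos : 0 < ‖b - a‖ ^ 2 := by linarith
  rw [hnum, hden] at *
  exact ⟨div_pos (by linarith) hpos, (div_lt_one hpos).2 (by linarith)⟩

theorem Finset.smul_add_smul_mem_intrinsicInterior_convexHull_insert {F : Type*}
    [NormedAddCommGroup F] [NormedSpace ℝ F] [DecidableEq F] {s : Finset F} {x q : F} {t : ℝ}
    (hs : AffineIndependent ℝ ((↑) : ↥(s : Set F) → F)) (hq : q ∉ affineSpan ℝ (s : Set F))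
    (hx : x ∈ intrinsicInterior ℝ (convexHull ℝ (s : Set F))) (ht : t ∈ Set.Ioo 0 1) :
    t • x + (1 - t) • q ∈ intrinsicInterior ℝ (convexHull ℝ ((insert q s : Finset F) : Set F)) := by
  have hqs : q ∉ s := fun h => hq (subset_affineSpan ℝ _ h)
  have hind : AffineIndependent ℝ ((↑) : ↥((insert q s : Finset F) : Set F) → F) := by
    rw [coe_insert]
    exact hs.insert_of_notMem_affineSpan hq
  obtain ⟨w, hw, hw1, rfl⟩ := (mem_intrinsicInterior_convexHull_iff hs).1 hx
  have hupdate : ∀ z ∈ s, Function.update (t • w) q (1 - t) z = t * w z := fun z hz => by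
    rw [Function.update_of_ne (ne_of_mem_of_not_mem hz hqs)]; rfl
  refine (mem_intrinsicInterior_convexHull_iff hind).2
    ⟨Function.update (t • w) q (1 - t), fun z hz => ?_, ?_, ?_⟩
  · rcases mem_insert.1 hz with rfl | hz
    · simpa using ht.2
    · rw [hupdate z hz]
      exact mul_pos ht.1 (hw z hz)
  · rw [sum_insert hqs, sum_congr rfl hupdate, ← mul_sum, hw1, Function.update_self]
    ring
  · rw [sum_insert hqs, sum_congr rfl fun z hz => by rw [hupdate z hz, mul_smul],
      ← smul_sum, Function.update_self, add_comm]

theorem norm_le_of_mem_affineSpan_of_forall_inner_eq {s : Set E} {y : E} {c : ℝ}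
    (hy : y ∈ affineSpan ℝ s) (h : ∀ z ∈ s, ⟪y, z⟫_ℝ = c) :
    ∀ w ∈ affineSpan ℝ s, ‖y‖ ≤ ‖w‖ := by
  have hc : c = ‖y‖ ^ 2 := by rw [← inner_eq_of_mem_affineSpan h hy, real_inner_self_eq_norm_sq]
  exact (AffineSubspace.forall_norm_le_iff_forall_inner_eq hy).2 fun w hw =>
    (inner_eq_of_mem_affineSpan h hw).trans hc

/-- If `P` is a corral with affine minimizer `x`, and `q ∈ span(x, (span P)^⊥)` satisfies
`⟪q, x⟫ < min{‖q‖², ‖x‖²}`, then `P ∪ {q}` is a corral and the minimum norm point of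
`conv (P ∪ {q})` is `λ•x + (1-λ)•q` with `λ = ⟪q, q - x⟫ / ‖q - x‖² ∈ (0, 1)`. -/
theorem stmt_6 (d : ℕ) (P : Set (EuclideanSpace ℝ (Fin d)))
    (hPc : IsCorral P)
    (x : EuclideanSpace ℝ (Fin d))
    (hxmem : x ∈ affineSpan ℝ P) (hxmin : ∀ w ∈ affineSpan ℝ P, ‖x‖ ≤ ‖w‖)
    (q : EuclideanSpace ℝ (Fin d))
    (hq : q ∈ Submodule.span ℝ {x} ⊔ (Submodule.span ℝ P)ᗮ)
    (hqx : ⟪q, x⟫_ℝ < min (‖q‖ ^ 2) (‖x‖ ^ 2)) :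
    IsCorral (P ∪ {q}) ∧
      0 < ⟪q, q - x⟫_ℝ / ‖q - x‖ ^ 2 ∧ ⟪q, q - x⟫_ℝ / ‖q - x‖ ^ 2 < 1 ∧
      (⟪q, q - x⟫_ℝ / ‖q - x‖ ^ 2) • x + (1 - ⟪q, q - x⟫_ℝ / ‖q - x‖ ^ 2) • q
          ∈ convexHull ℝ (P ∪ {q}) ∧
      ∀ w ∈ convexHull ℝ (P ∪ {q}),
        ‖(⟪q, q - x⟫_ℝ / ‖q - x‖ ^ 2) • x + (1 - ⟪q, q - x⟫_ℝ / ‖q - x‖ ^ 2) • q‖ ≤ ‖w‖ := by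
  classical
  obtain ⟨hPfin, hPind, m, hmmem, hmmin, hmint⟩ := hPc
  lift P to Finset (EuclideanSpace ℝ (Fin d)) using hPfin
  have hxP := (AffineSubspace.forall_norm_le_iff_forall_inner_eq hxmem).1 hxmin
  have hx_int : x ∈ intrinsicInterior ℝ (convexHull ℝ (P : Set _)) :=
    AffineSubspace.eq_of_forall_norm_le hmmem hxmem hmmin hxmin ▸ hmint
  have hq_notMem : q ∉ affineSpan ℝ (P : Set _) := fun h => by
    linarith [real_inner_comm x q ▸ hxP q h, min_le_right (‖q‖ ^ 2) (‖x‖ ^ 2)]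
  have hxq : x ≠ q := fun h => hq_notMem (h ▸ hxmem)
  set lam := ⟪q, q - x⟫_ℝ / ‖q - x‖ ^ 2
  set y := lam • x + (1 - lam) • q
  have hlam : lam ∈ Set.Ioo 0 1 := inner_sub_div_norm_sub_sq_mem_Ioo hqx
  have hS : (P : Set _) ∪ {q} = ↑(insert q P) := by rw [Finset.coe_insert, union_singleton]
  have hy_int : y ∈ intrinsicInterior ℝ (convexHull ℝ (↑P ∪ {q})) :=
    hS ▸ Finset.smul_add_smul_mem_intrinsicInterior_convexHull_insert hPind hq_notMem hx_int hlam
  have hy_span : y ∈ affineSpan ℝ (↑P ∪ {q}) :=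
    convexHull_subset_affineSpan _ (intrinsicInterior_subset hy_int)
  have hy_mem : y ∈ Submodule.span ℝ {x} ⊔ (Submodule.span ℝ (P : Set _))ᗮ :=
    add_mem (Submodule.smul_mem _ _ (Submodule.mem_sup_left (Submodule.mem_span_singleton_self x)))
      (Submodule.smul_mem _ _ hq)
  have hy_const : ∀ z ∈ (P : Set _) ∪ {q}, ⟪y, z⟫_ℝ = ⟪y, x⟫_ℝ := by
    rintro z (hz | rfl)
    · exact inner_eq_inner_of_mem_span_sup_orthogonal hxmem hxP hy_mem hz
    · have := inner_smul_add_smul_sub_eq_zero hxq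
      rwa [inner_sub_right, sub_eq_zero] at this
  have hy_min := norm_le_of_mem_affineSpan_of_forall_inner_eq hy_span hy_const
  refine ⟨⟨(P.finite_toSet).union (finite_singleton q), ?_, y, hy_span, hy_min, hy_int⟩,
    hlam.1, hlam.2, intrinsicInterior_subset hy_int,
    fun w hw => hy_min w (convexHull_subset_affineSpan _ hw)⟩
  rw [union_singleton]
  exact hPind.insert_of_notMem_affineSpan hq_notMem
end

section
/- Let p_1, …, p_n be points in ℝ^d and let x* be the point of minimum Euclidean norm in conv{p_1, …, p_n}. Then there exists a subset C ⊆ {p_1, …, p_n} of affinely independent points such that x* lies in the relative interior of conv C and x* is the point of minimum Euclidean norm in the affine hull of C; in particular, C is a corral whose affine minimizer is x*. -/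
open InnerProductSpace

/-! By Carathéodory's theorem `x` is a combination with positive weights of affinely independent
points `C ⊆ {p_i}`, hence lies in the relative interior of `conv C`. There `conv C` is a
neighbourhood of `x` within `aff C`, so `x` is a local minimum of the convex function `‖·‖`
on `aff C`, hence a global one. -/

open Set Filter Topology

theorem mem_nhdsWithin_affineSpan_of_mem_intrinsicInterior {𝕜 V P : Type*} [Ring 𝕜]
    [AddCommGroup V] [Module 𝕜 V] [TopologicalSpace P] [AddTorsor V P] {s : Set P} {x : P}
    (hx : x ∈ intrinsicInterior 𝕜 s) : s ∈ 𝓝[affineSpan 𝕜 s] x := by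
  obtain ⟨y, hy, rfl⟩ := mem_intrinsicInterior.mp hx
  exact preimage_coe_mem_nhds_subtype.mp (mem_interior_iff_mem_nhds.mp hy)

theorem IsMinOn.affineSpan_of_mem_intrinsicInterior {E : Type*} [AddCommGroup E]
    [TopologicalSpace E] [Module ℝ E] [IsTopologicalAddGroup E] [ContinuousSMul ℝ E]
    {K : Set E} {f : E → ℝ} {x : E} (hmin : IsMinOn f K x) (hx : x ∈ intrinsicInterior ℝ K)
    (hf : ConvexOn ℝ (affineSpan ℝ K) f) : IsMinOn f (affineSpan ℝ K) x :=
  .of_isLocalMinOn_of_convexOn (subset_affineSpan ℝ K (intrinsicInterior_subset hx))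
    (mem_of_superset (mem_nhdsWithin_affineSpan_of_mem_intrinsicInterior hx) hmin) hf

theorem AffineIndependent.affineCombination_mem_intrinsicInterior_convexHull {ι V : Type*}
    [Fintype ι] [NormedAddCommGroup V] [NormedSpace ℝ V] {z : ι → V}
    (hz : AffineIndependent ℝ z) {w : ι → ℝ} (hw : ∀ i, 0 < w i) (hw₁ : ∑ i, w i = 1) :
    Finset.univ.affineCombination ℝ z w ∈ intrinsicInterior ℝ (convexHull ℝ (range z)) := by
  set A := affineSpan ℝ (range z)
  have : FiniteDimensional ℝ A.direction :=
    finiteDimensional_direction_affineSpan_of_finite ℝ (finite_range z)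
  have : Nonempty ι :=
    Finset.univ_nonempty_iff.mp (Finset.nonempty_of_sum_ne_zero (f := w) (hw₁ ▸ one_ne_zero))
  have : Nonempty (range z) := (range_nonempty z).to_subtype
  let b : AffineBasis ι ℝ A :=
    ⟨fun i => ⟨z i, subset_affineSpan ℝ _ ⟨i, rfl⟩⟩, .of_comp A.subtype hz, by
      rw [← affineSpan_coe_preimage_eq_top (range z)]
      congr 1
      ext
      simp [Subtype.ext_iff]⟩
  have hb : ∀ c : ι → ℝ, ∑ i, c i = 1 →
      (Finset.univ.affineCombination ℝ b c : V) = Finset.univ.affineCombination ℝ z c :=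
    fun c hc => Finset.map_affineCombination _ b c hc A.subtype
  -- Positive barycentric coordinates cut out an open subset of `A` contained in the simplex.
  let U : Set A := ⋂ i, {a | 0 < b.coord i a}
  have hU : IsOpen U :=
    isOpen_iInter_of_finite fun i => isOpen_lt continuous_const (continuous_barycentric_coord b i)
  have hUK : U ⊆ (↑) ⁻¹' convexHull ℝ (range z) := by
    intro a ha
    rw [mem_iInter] at ha
    rw [mem_preimage, ← b.affineCombination_coord_eq_self a, hb _ (b.sum_coord_apply_eq_one a)]
    exact affineCombination_mem_convexHull (fun i _ => (ha i).le) (b.sum_coord_apply_eq_one a)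
  have hwU : Finset.univ.affineCombination ℝ b w ∈ U := by
    refine mem_iInter.mpr fun i => ?_
    rw [mem_ofPred_eq, b.coord_apply_combination_of_mem (Finset.mem_univ i) hw₁]
    exact hw i
  rw [intrinsicInterior, affineSpan_convexHull]
  exact ⟨_, interior_maximal hUK hU hwU, hb w hw₁⟩

/-- If `x*` is the minimum norm point of `conv{p_1, …, p_n}`, then there is a subset
`C ⊆ {p_1, …, p_n}` of affinely independent points such that `x*` lies in the relative interior
of `conv C` and `x*` is the minimum norm point of the affine hull of `C`; in particular `C` is
a corral whose affine minimizer is `x*`. -/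
theorem stmt_8 (d n : ℕ) (p : Fin n → EuclideanSpace ℝ (Fin d))
    (x : EuclideanSpace ℝ (Fin d))
    (hxmem : x ∈ convexHull ℝ (Set.range p))
    (hxmin : ∀ w ∈ convexHull ℝ (Set.range p), ‖x‖ ≤ ‖w‖) :
    ∃ C : Set (EuclideanSpace ℝ (Fin d)), C ⊆ Set.range p ∧
      AffineIndependent ℝ ((↑) : C → EuclideanSpace ℝ (Fin d)) ∧
      x ∈ intrinsicInterior ℝ (convexHull ℝ C) ∧
      x ∈ affineSpan ℝ C ∧ (∀ w ∈ affineSpan ℝ C, ‖x‖ ≤ ‖w‖) ∧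
      IsCorral C := by
  obtain ⟨ι, _, z, w, hzp, hz, hw, hw₁, rfl⟩ := eq_pos_convex_span_of_mem_convexHull hxmem
  set x := ∑ i, w i • z i
  have hint : x ∈ intrinsicInterior ℝ (convexHull ℝ (range z)) := by
    simpa [x, Finset.affineCombination_eq_linear_combination _ _ _ hw₁] using
      hz.affineCombination_mem_intrinsicInterior_convexHull hw hw₁
  have hspan : x ∈ affineSpan ℝ (range z) := by
    simpa using subset_affineSpan ℝ _ (intrinsicInterior_subset hint)
  have hmin : ∀ y ∈ affineSpan ℝ (range z), ‖x‖ ≤ ‖y‖ := by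
    have := IsMinOn.affineSpan_of_mem_intrinsicInterior
      (fun y hy => hxmin y (convexHull_mono hzp hy)) hint
      (convexOn_norm (AffineSubspace.convex _))
    rw [affineSpan_convexHull] at this
    exact isMinOn_iff.mp this
  exact ⟨range z, hzp, hz.range, hint, hspan, hmin, finite_range z, hz.range, x, hspan, hmin, hint⟩
end

section
/- Let A be a d × n real matrix, b ∈ ℝ^d, c ∈ ℝ^n, and let x ∈ ℝ^n satisfy A x ≤ b. Then x maximizes c^T x over {x' ∈ ℝ^n : A x' ≤ b} (i.e., c^T x' ≤ c^T x for all x' with A x' ≤ b) if and only if there exists y ∈ ℝ^d with y ≥ 0, A^T y = c, and b^T y ≤ c^T x. -/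
/-!
Weak duality gives one direction. For the other, homogenise: if `x` is a maximiser, then
`cᵀξ + τ cᵀx ≥ 0` whenever `Aξ + τ b ≥ 0` and `τ ≥ 0` (test the feasible points `x - ξ` and
`-ξ/τ`), and Farkas' lemma for the matrix `(A | b; 0 | 1)` yields the dual vector. Farkas' lemma
is hyperplane separation from the cone generated by the rows, which is closed because, by conic
Carathéodory, it is a finite union of images of orthants under injective linear maps.
-/

open Matrix Finset

section Caratheodory

variable {ι E : Type*} [Fintype ι] [AddCommGroup E] [Module ℝ E]

def piSupported (s : Finset ι) : Submodule ℝ (ι → ℝ) :=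
  Submodule.pi (↑s)ᶜ fun _ => ⊥

omit [Fintype ι] in
@[simp]
theorem mem_piSupported {s : Finset ι} {z : ι → ℝ} : z ∈ piSupported s ↔ ∀ i ∉ s, z i = 0 := by
  simp [piSupported, Submodule.mem_pi]

theorem exists_sub_smul_nonneg_apply_eq_zero {y z : ι → ℝ} (hy : 0 ≤ y) (hz : ∃ i, 0 < z i) :
    ∃ i, 0 < z i ∧ ∃ t : ℝ, 0 ≤ y - t • z ∧ (y - t • z) i = 0 := by
  obtain ⟨i, hi, hmin⟩ := (univ.filter (0 < z ·)).exists_min_image (fun i => y i / z i)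
    (by simpa [Finset.Nonempty] using hz)
  have hzi : 0 < z i := (mem_filter.mp hi).2
  refine ⟨i, hzi, y i / z i, fun j => ?_, by simp [hzi.ne']⟩
  have ht : 0 ≤ y i / z i := div_nonneg (hy i) hzi.le
  rcases le_or_gt (z j) 0 with hzj | hzj
  · simpa using (mul_nonpos_of_nonneg_of_nonpos ht hzj).trans (hy j)
  · have := hmin j (by simp [hzj])
    simpa [← le_div_iff₀ hzj] using this

theorem LinearMap.exists_nonneg_mem_piSupported_disjoint_ker (f : (ι → ℝ) →ₗ[ℝ] E) {y : ι → ℝ}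
    (hy : 0 ≤ y) :
    ∃ s : Finset ι, Disjoint (piSupported s) (LinearMap.ker f) ∧
      ∃ y' ∈ piSupported s, 0 ≤ y' ∧ f y' = f y := by
  suffices ∀ s : Finset ι, ∀ y, 0 ≤ y → y ∈ piSupported s →
      ∃ s : Finset ι, Disjoint (piSupported s) (LinearMap.ker f) ∧
        ∃ y' ∈ piSupported s, 0 ≤ y' ∧ f y' = f y from this univ y hy (by simp)
  classical
  intro s
  induction s using Finset.strongInduction with
  | H s ih =>
  intro y hy hys
  by_cases hs : Disjoint (piSupported s) (LinearMap.ker f)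
  · exact ⟨s, hs, y, hys, hy, rfl⟩
  obtain ⟨z, hzs, hzf, hz⟩ : ∃ z ∈ piSupported s, z ∈ LinearMap.ker f ∧ z ≠ 0 := by
    simpa [Submodule.disjoint_def] using hs
  obtain ⟨j, hj⟩ : ∃ j, z j ≠ 0 := Function.ne_iff.mp hz
  obtain ⟨i, hi, t, hyt, hyti⟩ := exists_sub_smul_nonneg_apply_eq_zero (z := (z j)⁻¹ • z) hy
    ⟨j, by simp [inv_mul_cancel₀ hj]⟩
  have his : i ∈ s := by
    by_contra h
    simp [(mem_piSupported.mp hzs) i h] at hi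
  obtain ⟨s', hs', y', hy's', hy', hfy'⟩ := ih (s.erase i) (erase_ssubset his) _ hyt <| by
    refine mem_piSupported.mpr fun k hk => ?_
    rcases eq_or_ne k i with rfl | hki
    · exact hyti
    · have hks : k ∉ s := fun h => hk (mem_erase.mpr ⟨hki, h⟩)
      simp [(mem_piSupported.mp hys) k hks, (mem_piSupported.mp hzs) k hks]
  refine ⟨s', hs', y', hy's', hy', ?_⟩
  rw [hfy', map_sub, map_smul, map_smul, LinearMap.mem_ker.mp hzf, smul_zero, smul_zero, sub_zero]

variable [TopologicalSpace E] [IsTopologicalAddGroup E] [ContinuousSMul ℝ E] [T2Space E]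

theorem LinearMap.isClosed_image_piSupported_inter_nonneg {f : (ι → ℝ) →ₗ[ℝ] E} {s : Finset ι}
    (hs : Disjoint (piSupported s) (LinearMap.ker f)) :
    IsClosed (f '' (piSupported s ∩ {y | 0 ≤ y})) := by
  have hker : LinearMap.ker (f.domRestrict (piSupported s)) = ⊥ := by
    rw [LinearMap.ker_domRestrict]
    exact Submodule.disjoint_iff_comap_eq_bot.mp hs
  have := (LinearMap.isClosedEmbedding_of_injective hker).isClosedMap _
    ((isClosed_Ici (a := (0 : ι → ℝ))).preimage continuous_subtype_val)
  convert this using 1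
  ext x
  simp [and_assoc, and_left_comm]

theorem LinearMap.isClosed_image_nonneg (f : (ι → ℝ) →ₗ[ℝ] E) : IsClosed (f '' {y | 0 ≤ y}) := by
  have : f '' {y | 0 ≤ y} = ⋃ s ∈ {s : Finset ι | Disjoint (piSupported s) (LinearMap.ker f)},
      f '' (piSupported s ∩ {y | 0 ≤ y}) := by
    refine subset_antisymm ?_ (Set.iUnion₂_subset fun s _ => Set.image_mono Set.inter_subset_right)
    rintro _ ⟨y, hy, rfl⟩
    obtain ⟨s, hs, y', hy's, hy', hfy'⟩ := LinearMap.exists_nonneg_mem_piSupported_disjoint_ker f hy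
    exact Set.mem_biUnion hs ⟨y', ⟨hy's, hy'⟩, hfy'⟩
  rw [this]
  exact (Set.toFinite _).isClosed_biUnion fun s hs => isClosed_image_piSupported_inter_nonneg hs

end Caratheodory

theorem Matrix.exists_nonneg_vecMul_eq_of_forall_mulVec_nonneg {ι κ : Type*} [Fintype ι]
    [Fintype κ] {M : Matrix ι κ ℝ} {g : κ → ℝ} (h : ∀ p, 0 ≤ M *ᵥ p → 0 ≤ g ⬝ᵥ p) :
    ∃ y, 0 ≤ y ∧ y ᵥ* M = g := by
  classical
  by_contra hg
  let C : ProperCone ℝ (κ → ℝ) :=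
    ⟨(PointedCone.positive ℝ (ι → ℝ)).map M.vecMulLinear, M.vecMulLinear.isClosed_image_nonneg⟩
  have hgC : g ∉ C := fun ⟨y, hy, hyg⟩ => hg ⟨y, hy, hyg⟩
  obtain ⟨φ, hφC, hφg⟩ := C.hyperplane_separation_point hgC
  let p : κ → ℝ := fun j => φ fun k => if j = k then 1 else 0
  have hφ (v : κ → ℝ) : φ v = v ⬝ᵥ p := (φ : (κ → ℝ) →ₗ[ℝ] ℝ).pi_apply_eq_sum_univ v
  have hMp : 0 ≤ M *ᵥ p := fun i => by
    have := hφC (M.row i) ⟨Pi.single i 1, by simp, single_one_vecMul i M⟩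
    rwa [hφ] at this
  linarith [h p hMp, hφ g]

section LinearProgramming

variable {ι κ : Type*} [Fintype ι] [Fintype κ] {A : Matrix ι κ ℝ} {b : ι → ℝ} {c x : κ → ℝ}

theorem Matrix.dotProduct_le_of_transpose_mulVec_eq {y : ι → ℝ} {x' : κ → ℝ} (hy : 0 ≤ y) (hAy : Aᵀ *ᵥ y = c)
    (hx' : A *ᵥ x' ≤ b) : c ⬝ᵥ x' ≤ b ⬝ᵥ y :=
  calc c ⬝ᵥ x' = y ⬝ᵥ A *ᵥ x' := by rw [← hAy, mulVec_transpose, dotProduct_mulVec]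
    _ ≤ y ⬝ᵥ b := dotProduct_le_dotProduct_of_nonneg_left hx' hy
    _ = b ⬝ᵥ y := dotProduct_comm y b

omit [Fintype ι] in
theorem Matrix.dotProduct_add_mul_nonneg_of_maximizer (hx : A *ᵥ x ≤ b)
    (hopt : ∀ x', A *ᵥ x' ≤ b → c ⬝ᵥ x' ≤ c ⬝ᵥ x) {ξ : κ → ℝ} {τ : ℝ} (hτ : 0 ≤ τ)
    (hξ : 0 ≤ A *ᵥ ξ + τ • b) : 0 ≤ c ⬝ᵥ ξ + τ * c ⬝ᵥ x := by
  rcases hτ.eq_or_lt with rfl | hτ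
  · have hfeas : A *ᵥ (x - ξ) ≤ b := fun i => by
      have hξi := hξ i
      have hxi := hx i
      simp only [mulVec_sub, Pi.sub_apply, Pi.add_apply, zero_smul, add_zero, Pi.zero_apply]
        at hξi hxi ⊢
      linarith
    have := hopt _ hfeas
    rw [dotProduct_sub] at this
    linarith
  · have hfeas : A *ᵥ (-τ⁻¹ • ξ) ≤ b := fun i => by
      have hξi := mul_nonneg (inv_nonneg.mpr hτ.le) (hξ i)
      simp only [mulVec_smul, Pi.smul_apply, Pi.add_apply, smul_eq_mul] at hξi ⊢
      rw [mul_add, ← mul_assoc, inv_mul_cancel₀ hτ.ne', one_mul] at hξi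
      linarith
    have := mul_le_mul_of_nonneg_left (hopt _ hfeas) hτ.le
    rw [dotProduct_smul, smul_eq_mul, ← mul_assoc, mul_neg, mul_inv_cancel₀ hτ.ne'] at this
    linarith

theorem Matrix.exists_nonneg_transpose_mulVec_eq_of_maximizer (hx : A *ᵥ x ≤ b)
    (hopt : ∀ x', A *ᵥ x' ≤ b → c ⬝ᵥ x' ≤ c ⬝ᵥ x) :
    ∃ y, 0 ≤ y ∧ Aᵀ *ᵥ y = c ∧ b ⬝ᵥ y ≤ c ⬝ᵥ x := by
  -- the last dual coordinate is the slack `cᵀx - bᵀy`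
  obtain ⟨y, hy, hyM⟩ := exists_nonneg_vecMul_eq_of_forall_mulVec_nonneg
    (M := fromBlocks A (replicateCol Unit b) 0 1) (g := Sum.elim c fun _ => c ⬝ᵥ x) <| by
      intro p hp
      have hcol : replicateCol Unit b *ᵥ (p ∘ Sum.inr) = p (.inr ()) • b := by
        ext i; simp [mulVec, dotProduct, mul_comm]
      rw [fromBlocks_mulVec, ← Sum.elim_zero_zero, Sum.elim_le_elim_iff] at hp
      have := dotProduct_add_mul_nonneg_of_maximizer hx hopt (ξ := p ∘ Sum.inl) (τ := p (.inr ()))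
        (by simpa using hp.2 ()) (by simpa [hcol] using hp.1)
      simpa [dotProduct, Fintype.sum_sum_type, mul_comm] using this
  rw [vecMul_fromBlocks] at hyM
  have hAy : y ∘ Sum.inl ᵥ* A = c := funext fun j => by simpa using congrFun hyM (.inl j)
  refine ⟨y ∘ Sum.inl, fun i => hy _, by rwa [mulVec_transpose], ?_⟩
  have := congrFun hyM (.inr ())
  simp only [mulVec_replicateCol_eq_const, Sum.elim_inr, Pi.add_apply, Function.const_apply,
    vecMul_one, Function.comp_apply] at this
  have hslack : 0 ≤ y (.inr ()) := hy _
  linarith [dotProduct_comm b (y ∘ Sum.inl)]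

end LinearProgramming

/-- KKT/duality: a feasible `x` (i.e. `A x ≤ b`) maximizes `c^T x'` over `{x' : A x' ≤ b}` iff
there is `y ≥ 0` with `Aᵀ y = c` and `bᵀ y ≤ cᵀ x`. -/
theorem stmt_10 (d n : ℕ) (A : Matrix (Fin d) (Fin n) ℝ) (b : Fin d → ℝ) (c : Fin n → ℝ)
    (x : Fin n → ℝ) (hx : A.mulVec x ≤ b) :
    (∀ x' : Fin n → ℝ, A.mulVec x' ≤ b → c ⬝ᵥ x' ≤ c ⬝ᵥ x) ↔
      ∃ y : Fin d → ℝ, 0 ≤ y ∧ Aᵀ.mulVec y = c ∧ b ⬝ᵥ y ≤ c ⬝ᵥ x := by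
  refine ⟨exists_nonneg_transpose_mulVec_eq_of_maximizer hx, ?_⟩
  rintro ⟨y, hy, hAy, hby⟩ x' hx'
  exact (dotProduct_le_of_transpose_mulVec_eq hy hAy hx').trans hby
end

section
/- Let A be a d × n real matrix, b ∈ ℝ^d and c ∈ ℝ^n, and suppose {x ∈ ℝ^n : A x ≤ b} is nonempty. Then the supremum of c^T x over {x : A x ≤ b} is finite and attained if and only if there exist x ∈ ℝ^n and y ∈ ℝ^d with A x ≤ b, y ≥ 0, A^T y = c, and b^T y ≤ c^T x. -/
/-!
Weak duality gives `←`. For `→`, let `x` be optimal with value `v`. Then `(c, v)` lies in the cone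
generated by the rows `(Aᵢ, bᵢ)` and by `(0, 1)`: otherwise Farkas' lemma yields `(u, τ)` with
`A u + τ b ≥ 0`, `τ ≥ 0` and `c ⬝ᵥ u + τ v < 0`, and then `(1 + τ)⁻¹ (x - u)` is feasible with value
larger than `v`. The coefficients of `(c, v)` in this cone form the dual certificate `y`.
Farkas' lemma is the separation theorem for closed cones; finitely generated cones are closed
because, by the conic Carathéodory argument, they are finite unions of images of orthants under
injective linear maps.
-/

open Matrix Finset

namespace PointedCone

section OrderedField

variable {𝕜 E : Type*} [Field 𝕜] [LinearOrder 𝕜] [IsStrictOrderedRing 𝕜]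
  [AddCommGroup E] [Module 𝕜 E] {t : Finset E} {x : E}

lemma mem_hull_finset :
    x ∈ hull 𝕜 (t : Set E) ↔ ∃ f : E → 𝕜, (∀ e ∈ t, 0 ≤ f e) ∧ ∑ e ∈ t, f e • e = x := by
  classical
  rw [hull, Submodule.mem_span_finset]
  constructor
  · rintro ⟨f, -, rfl⟩
    exact ⟨fun e => f e, fun e _ => (f e).2, by simp only [Nonneg.coe_smul]⟩
  · rintro ⟨f, hf, rfl⟩
    refine ⟨fun e => if he : e ∈ t then ⟨f e, hf e he⟩ else 0, ?_, ?_⟩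
    · exact Function.support_subset_iff'.2 fun e he => dif_neg he
    · refine sum_congr rfl fun e he => ?_
      simp [he, ← Nonneg.coe_smul]

theorem mem_hull_erase [DecidableEq E] (h : ¬LinearIndepOn 𝕜 id (t : Set E))
    (hx : x ∈ hull 𝕜 (t : Set E)) : ∃ y ∈ t, x ∈ hull 𝕜 (t.erase y : Set E) := by
  obtain ⟨f, hf, rfl⟩ := mem_hull_finset.1 hx
  obtain ⟨g, hg, hgpos⟩ : ∃ g : E → 𝕜, ∑ e ∈ t, g e • e = 0 ∧ ∃ e ∈ t, 0 < g e := by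
    obtain ⟨g, hg, e, he, hge⟩ := not_linearIndepOn_finset_iff.1 h
    simp only [id] at hg
    rcases hge.lt_or_gt with hneg | hpos
    · exact ⟨-g, by simp [neg_smul, hg], e, he, by simpa⟩
    · exact ⟨g, hg, e, he, hpos⟩
  obtain ⟨y, hy, hmin⟩ := exists_min_image {e ∈ t | 0 < g e} (fun e => f e / g e)
    (by simpa [Finset.Nonempty] using hgpos)
  rw [mem_filter] at hy
  -- moving along the relation `g` until the first coefficient vanishes keeps all others `≥ 0`
  set k : E → 𝕜 := fun e => f e - f y / g y * g e
  have hky : k y = 0 := by simp [k, hy.2.ne']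
  refine ⟨y, hy.1, mem_hull_finset.2 ⟨k, fun e he => ?_, ?_⟩⟩
  · obtain ⟨-, het⟩ := mem_erase.1 he
    rcases lt_or_ge 0 (g e) with hge | hge
    · have := hmin e (mem_filter.2 ⟨het, hge⟩)
      rw [le_div_iff₀ hge] at this
      simpa [k, sub_nonneg] using this
    · have : f y / g y * g e ≤ 0 :=
        mul_nonpos_of_nonneg_of_nonpos (div_nonneg (hf y hy.1) hy.2.le) hge
      simp only [k]
      linarith [hf e het]
  · calc ∑ e ∈ t.erase y, k e • e = ∑ e ∈ t, k e • e := sum_erase _ (by rw [hky, zero_smul])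
      _ = ∑ e ∈ t, f e • e := by
        simp only [k, sub_smul, mul_smul, sum_sub_distrib, ← smul_sum, hg, smul_zero, sub_zero]

end OrderedField

section Topology

variable {E : Type*} [AddCommGroup E] [Module ℝ E] [TopologicalSpace E] [IsTopologicalAddGroup E]
  [ContinuousSMul ℝ E] [T2Space E]

theorem isClosed_hull_finset (t : Finset E) : IsClosed (hull ℝ (t : Set E) : Set E) := by
  classical
  induction t using Finset.strongInduction with
  | H t ih =>
  by_cases hli : LinearIndepOn ℝ id (t : Set E)
  · have hhull : (hull ℝ (t : Set E) : Set E) =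
        Fintype.linearCombination ℝ ((↑) : t → E) '' Set.Ici 0 := by
      ext x
      simp only [SetLike.mem_coe, hull, Submodule.mem_span_finset', Set.mem_image, Set.mem_Ici,
        Fintype.linearCombination_apply]
      constructor
      · rintro ⟨f, rfl⟩
        exact ⟨fun a => f a, fun a => (f a).2, by simp only [Nonneg.coe_smul]⟩
      · rintro ⟨f, hf, rfl⟩
        exact ⟨fun a => ⟨f a, hf a⟩, by simp only [← Nonneg.coe_smul]⟩
    rw [hhull]
    exact (LinearMap.isClosedEmbedding_of_injective (LinearMap.ker_eq_bot.2
      hli.fintypeLinearCombination_injective)).isClosedMap _ isClosed_Ici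
  · have hhull : (hull ℝ (t : Set E) : Set E) = ⋃ y ∈ t, hull ℝ (t.erase y : Set E) := by
      refine subset_antisymm (fun x hx => ?_) ?_
      · obtain ⟨y, hy, hxy⟩ := mem_hull_erase hli hx
        exact Set.mem_iUnion₂_of_mem hy hxy
      · exact Set.iUnion₂_subset fun y _ => Submodule.span_mono (coe_subset.2 (erase_subset y t))
    rw [hhull]
    exact isClosed_biUnion_finset fun y hy => ih _ (erase_ssubset hy)

theorem isClosed_hull_of_finite {s : Set E} (hs : s.Finite) : IsClosed (hull ℝ s : Set E) := by
  lift s to Finset E using hs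
  exact isClosed_hull_finset s

end Topology

end PointedCone

namespace Matrix

variable {m k : Type*} [Fintype m] [Fintype k]

theorem exists_nonneg_vecMul_eq_iff (M : Matrix m k ℝ) (w : k → ℝ) :
    (∃ y, 0 ≤ y ∧ y ᵥ* M = w) ↔ ∀ u, 0 ≤ M *ᵥ u → 0 ≤ w ⬝ᵥ u := by
  classical
  constructor
  · rintro ⟨y, hy, rfl⟩ u hu
    rw [← dotProduct_mulVec]
    exact dotProduct_nonneg_of_nonneg hy hu
  intro h
  by_contra hw
  let C : ProperCone ℝ (k → ℝ) :=
    ⟨PointedCone.hull ℝ (Set.range M), PointedCone.isClosed_hull_of_finite (Set.finite_range M)⟩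
  have hwC : w ∉ C := by
    intro hwC
    obtain ⟨c, hc⟩ := (Submodule.mem_span_range_iff_exists_fun _).1 hwC
    exact hw ⟨fun i => c i, fun i => (c i).2, by simp only [vecMul_eq_sum, Nonneg.coe_smul, hc]⟩
  obtain ⟨f, hfC, hfw⟩ := C.hyperplane_separation_point hwC
  set u : k → ℝ := fun j => f (Pi.single j 1)
  have hf : ∀ z, f z = z ⬝ᵥ u := fun z => by
    conv_lhs => rw [pi_eq_sum_univ' z]
    simp [dotProduct, u]
  have hMu : 0 ≤ M *ᵥ u := fun i => by
    simpa [mulVec, hf] using hfC (M i) (PointedCone.subset_hull (Set.mem_range_self i))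
  exact (h u hMu).not_gt (by rwa [← hf])

theorem dotProduct_le_of_mulVec_le {A : Matrix m k ℝ} {b : m → ℝ} {c x : k → ℝ} {y : m → ℝ}
    (hx : A *ᵥ x ≤ b) (hy : 0 ≤ y) (hAy : Aᵀ *ᵥ y = c) : c ⬝ᵥ x ≤ b ⬝ᵥ y := by
  rw [← hAy, mulVec_transpose, ← dotProduct_mulVec, dotProduct_comm b]
  exact dotProduct_le_dotProduct_of_nonneg_left hx hy

theorem exists_dual_of_forall_dotProduct_le {A : Matrix m k ℝ} {b : m → ℝ} {c x : k → ℝ}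
    (hx : A *ᵥ x ≤ b) (hmax : ∀ x', A *ᵥ x' ≤ b → c ⬝ᵥ x' ≤ c ⬝ᵥ x) :
    ∃ y, 0 ≤ y ∧ Aᵀ *ᵥ y = c ∧ b ⬝ᵥ y ≤ c ⬝ᵥ x := by
  set M : Matrix (m ⊕ Unit) (k ⊕ Unit) ℝ := fromBlocks A (replicateCol Unit b) 0 1
  have hM : ∀ u₁ τ, M *ᵥ Sum.elim u₁ (fun _ => τ) = A *ᵥ u₁ + τ • b ⊕ᵥ fun _ => τ := by
    intro u₁ τ
    ext (i | i) <;> simp [M, mulVec, dotProduct, mul_comm]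
  have hfarkas : ∀ u, 0 ≤ M *ᵥ u → 0 ≤ Sum.elim c (fun _ => c ⬝ᵥ x) ⬝ᵥ u := by
    intro u hu
    obtain ⟨u₁, τ, rfl⟩ : ∃ u₁ τ, u = Sum.elim u₁ (fun _ : Unit => τ) :=
      ⟨u ∘ Sum.inl, u (Sum.inr ()), by ext (i | i) <;> rfl⟩
    rw [hM] at hu
    have hτ : 0 ≤ τ := hu (Sum.inr ())
    have hAu : ∀ i, 0 ≤ (A *ᵥ u₁) i + τ * b i := fun i => hu (Sum.inl i)
    have hx' : A *ᵥ ((1 + τ)⁻¹ • (x - u₁)) ≤ b := fun i => by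
      rw [mulVec_smul, mulVec_sub, Pi.smul_apply, Pi.sub_apply, smul_eq_mul,
        inv_mul_le_iff₀ (by positivity)]
      linarith [hx i, hAu i]
    have hval := hmax _ hx'
    rw [dotProduct_smul, dotProduct_sub, smul_eq_mul, inv_mul_le_iff₀ (by positivity)] at hval
    rw [sumElim_dotProduct_sumElim]
    simp only [dotProduct, Finset.univ_unique, Finset.sum_singleton] at hval ⊢
    linarith
  obtain ⟨y, hy, hyM⟩ := (exists_nonneg_vecMul_eq_iff M _).2 hfarkas
  simp only [M, vecMul_fromBlocks, vecMul_zero, add_zero, vecMul_one] at hyM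
  have hyA : y ∘ Sum.inl ᵥ* A = c := funext fun j => congrFun hyM (Sum.inl j)
  have hyb : b ⬝ᵥ y ∘ Sum.inl + y (Sum.inr ()) = c ⬝ᵥ x := by
    simpa [vecMul, dotProduct, mul_comm] using congrFun hyM (Sum.inr ())
  refine ⟨y ∘ Sum.inl, fun i => hy _, by rw [mulVec_transpose, hyA], ?_⟩
  linarith [show 0 ≤ y (Sum.inr ()) from hy _]

end Matrix

theorem stmt_11_general (d n : ℕ) (A : Matrix (Fin d) (Fin n) ℝ) (b : Fin d → ℝ) (c : Fin n → ℝ) :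
    (∃ x : Fin n → ℝ, A.mulVec x ≤ b ∧
        ∀ x' : Fin n → ℝ, A.mulVec x' ≤ b → c ⬝ᵥ x' ≤ c ⬝ᵥ x) ↔
      ∃ (x : Fin n → ℝ) (y : Fin d → ℝ), A.mulVec x ≤ b ∧ 0 ≤ y ∧
        Aᵀ.mulVec y = c ∧ b ⬝ᵥ y ≤ c ⬝ᵥ x := by
  constructor
  · rintro ⟨x, hx, hmax⟩
    obtain ⟨y, hy, hAy, hby⟩ := exists_dual_of_forall_dotProduct_le hx hmax
    exact ⟨x, y, hx, hy, hAy, hby⟩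
  · rintro ⟨x, y, hx, hy, hAy, hby⟩
    exact ⟨x, hx, fun x' hx' => (dotProduct_le_of_mulVec_le hx' hy hAy).trans hby⟩

/-- If `{x : A x ≤ b}` is nonempty, then `cᵀ x` attains a finite maximum over it iff there are
`x` and `y` with `A x ≤ b`, `y ≥ 0`, `Aᵀ y = c` and `bᵀ y ≤ cᵀ x`. -/
theorem stmt_11 (d n : ℕ) (A : Matrix (Fin d) (Fin n) ℝ) (b : Fin d → ℝ) (c : Fin n → ℝ)
    (hfeas : ∃ x : Fin n → ℝ, A.mulVec x ≤ b) :
    (∃ x : Fin n → ℝ, A.mulVec x ≤ b ∧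
        ∀ x' : Fin n → ℝ, A.mulVec x' ≤ b → c ⬝ᵥ x' ≤ c ⬝ᵥ x) ↔
      ∃ (x : Fin n → ℝ) (y : Fin d → ℝ), A.mulVec x ≤ b ∧ 0 ≤ y ∧
        Aᵀ.mulVec y = c ∧ b ⬝ᵥ y ≤ c ⬝ᵥ x :=
  stmt_11_general d n A b c
end

section
/- Let A be a d × n matrix and b ∈ ℝ^d whose entries are rational: A_{ij} = a_{ij}/α_{ij} and b_k = b_k'/β_k with integers a_{ij}, b_k' and nonzero integers α_{ij}, β_k. Let D = max(max_{i,j} |α_{ij}|, max_k |β_k|) and N = max(max_{i,j} |a_{ij}|, max_k |b_k'|) + 1. If the set {x ∈ ℝ^n : A x = b, x ≥ 0} is nonempty, then it contains a point x with ∑_{i=1}^n x_i ≤ n · D^{d(n+1)·min(d³, n³)} · N^{d(n+1)}. -/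
open Matrix

private lemma reduce_support (d n : ℕ) (A : Matrix (Fin d) (Fin n) ℝ) (b : Fin d → ℝ)
    (x c : Fin n → ℝ) (hxb : A.mulVec x = b) (hx0 : 0 ≤ x)
    (hc : A.mulVec c = 0) (hsupp : ∀ j, x j = 0 → c j = 0) (hpos : ∃ j, 0 < c j) :
    ∃ x' : Fin n → ℝ, A.mulVec x' = b ∧ 0 ≤ x' ∧
      (Finset.univ.filter fun j => x' j ≠ 0) ⊂ (Finset.univ.filter fun j => x j ≠ 0) := by
  classical
  have hx0' : ∀ j, 0 ≤ x j := hx0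
  set T : Finset (Fin n) := Finset.univ.filter fun j => 0 < c j with hT
  have hTne : T.Nonempty := by
    obtain ⟨j, hj⟩ := hpos
    exact ⟨j, by simp [hT, hj]⟩
  set t : ℝ := T.inf' hTne (fun j => x j / c j) with htdef
  have ht0 : 0 ≤ t := by
    apply Finset.le_inf'
    intro j hj
    have hcj : 0 < c j := by simpa [hT] using hj
    exact div_nonneg (hx0' j) hcj.le
  obtain ⟨j₀, hj₀T, hj₀⟩ := T.exists_mem_eq_inf' hTne (fun j => x j / c j)
  have hcj₀ : 0 < c j₀ := by simpa [hT] using hj₀T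
  have htj₀ : t = x j₀ / c j₀ := htdef.trans hj₀
  refine ⟨x - t • c, ?_, ?_, ?_⟩
  · rw [Matrix.mulVec_sub, hxb, Matrix.mulVec_smul, hc, smul_zero, sub_zero]
  · intro j
    simp only [Pi.sub_apply, Pi.smul_apply, smul_eq_mul, Pi.zero_apply]
    rcases lt_or_ge 0 (c j) with hcj | hcj
    · have hjT : j ∈ T := by simp [hT, hcj]
      have h1 := Finset.inf'_le (fun j => x j / c j) hjT
      rw [← htdef] at h1
      nlinarith [(le_div_iff₀ hcj).mp h1]
    · nlinarith [hx0' j, mul_nonneg ht0 (neg_nonneg.mpr hcj)]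
  · constructor
    · intro j hj
      simp only [Finset.mem_filter, Finset.mem_univ, true_and] at hj ⊢
      intro hxj
      exact hj (by simp [hxj, hsupp j hxj])
    · intro hsub
      have hxj₀ : x j₀ ≠ 0 := fun h => by simp [hsupp j₀ h] at hcj₀
      have hmem : j₀ ∈ Finset.univ.filter fun j => x j ≠ 0 := by simp [hxj₀]
      have h2 := hsub hmem
      simp only [Finset.mem_filter, Finset.mem_univ, true_and] at h2
      apply h2
      show x j₀ - t * c j₀ = 0
      rw [htj₀, div_mul_cancel₀ _ hcj₀.ne', sub_self]

private lemma exists_basic (d n : ℕ) (A : Matrix (Fin d) (Fin n) ℝ) (b : Fin d → ℝ)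
    (x : Fin n → ℝ) (hxb : A.mulVec x = b) (hx0 : 0 ≤ x) :
    ∃ y : Fin n → ℝ, A.mulVec y = b ∧ 0 ≤ y ∧
      LinearIndependent ℝ (fun j : {j : Fin n // y j ≠ 0} => fun i => A i (j : Fin n)) := by
  classical
  suffices H : ∀ m (x : Fin n → ℝ), (Finset.univ.filter fun j => x j ≠ 0).card ≤ m →
      A.mulVec x = b → 0 ≤ x → ∃ y : Fin n → ℝ, A.mulVec y = b ∧ 0 ≤ y ∧
      LinearIndependent ℝ (fun j : {j : Fin n // y j ≠ 0} => fun i => A i (j : Fin n)) by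
    exact H _ x le_rfl hxb hx0
  intro m
  induction m with
  | zero =>
    intro x hcard hxb hx0
    refine ⟨x, hxb, hx0, ?_⟩
    have : IsEmpty {j : Fin n // x j ≠ 0} := by
      constructor
      rintro ⟨j, hj⟩
      have hmem : j ∈ Finset.univ.filter fun j => x j ≠ 0 := by simp [hj]
      have := Finset.card_pos.mpr ⟨j, hmem⟩
      omega
    exact linearIndependent_empty_type
  | succ m ih =>
    intro x hcard hxb hx0
    by_cases hli : LinearIndependent ℝ (fun j : {j : Fin n // x j ≠ 0} => fun i => A i (j : Fin n))
    · exact ⟨x, hxb, hx0, hli⟩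
    rw [Fintype.not_linearIndependent_iff] at hli
    obtain ⟨g, hg, j₁, hj₁⟩ := hli
    set c : Fin n → ℝ := fun j => if h : x j ≠ 0 then g ⟨j, h⟩ else 0 with hcdef
    have hceq : ∀ j : {j : Fin n // x j ≠ 0}, c (j : Fin n) = g j := by
      rintro ⟨j, hj⟩; simp [hcdef, hj]
    have hAc : A.mulVec c = 0 := by
      funext i
      have hgi := congrFun hg i
      simp only [Finset.sum_apply, Pi.smul_apply, smul_eq_mul, Pi.zero_apply] at hgi
      rw [Matrix.mulVec, Pi.zero_apply]
      calc (fun j : Fin n => A i j) ⬝ᵥ c = ∑ j : Fin n, A i j * c j := rfl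
        _ = ∑ j ∈ Finset.univ.filter (fun j => x j ≠ 0), A i j * c j := by
            rw [Finset.sum_filter_of_ne]
            intro j _ hne
            by_contra hxj
            simp [hcdef, hxj] at hne
        _ = ∑ j : {j : Fin n // x j ≠ 0}, A i (j : Fin n) * c (j : Fin n) :=
            Finset.sum_subtype _ (by simp) _
        _ = ∑ j : {j : Fin n // x j ≠ 0}, g j * A i (j : Fin n) := by
            refine Finset.sum_congr rfl fun j _ => ?_
            rw [hceq j, mul_comm]
        _ = 0 := hgi
    have hsupp : ∀ j, x j = 0 → c j = 0 := by
      intro j hj; simp [hcdef, hj]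
    have key : ∀ c' : Fin n → ℝ, A.mulVec c' = 0 → (∀ j, x j = 0 → c' j = 0) →
        (∃ j, 0 < c' j) → ∃ y : Fin n → ℝ, A.mulVec y = b ∧ 0 ≤ y ∧
        LinearIndependent ℝ (fun j : {j : Fin n // y j ≠ 0} => fun i => A i (j : Fin n)) := by
      intro c' h1 h2 h3
      obtain ⟨x', hx'b, hx'0, hss⟩ := reduce_support d n A b x c' hxb hx0 h1 h2 h3
      exact ih x' (by have := Finset.card_lt_card hss; omega) hx'b hx'0
    rcases lt_trichotomy (g j₁) 0 with hneg | hzero | hposg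
    · refine key (-c) (by rw [Matrix.mulVec_neg, hAc, neg_zero])
        (fun j hj => by simp [hsupp j hj]) ⟨j₁, ?_⟩
      simp only [Pi.neg_apply, hceq j₁]
      linarith
    · exact absurd hzero hj₁
    · exact key c hAc hsupp ⟨j₁, by rw [hceq j₁]; exact hposg⟩


private lemma exists_rows (d r : ℕ) (M : Matrix (Fin d) (Fin r) ℝ)
    (h : LinearIndependent ℝ (fun j : Fin r => fun i => M i j)) :
    ∃ f : Fin r → Fin d, IsUnit (M.submatrix f id) := by
  classical
  have hMT : LinearIndependent ℝ Mᵀ := by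
    exact h
  have hrank : Mᵀ.rank = r := by
    rw [LinearIndependent.rank_matrix (M := Mᵀ) hMT, Fintype.card_fin]
  have hspan : Module.finrank ℝ (Submodule.span ℝ (Set.range M)) = r := by
    have := Matrix.rank_eq_finrank_span_row M
    rw [← Matrix.rank_transpose, hrank] at this
    exact this.symm
  obtain ⟨s, hs_sub, hs_span, hs_ind⟩ := exists_linearIndependent ℝ (Set.range M)
  have hsfin : s.Finite := hs_ind.setFinite
  haveI : Fintype s := hsfin.fintype
  have hcard : s.toFinset.card = r := by
    rw [← finrank_span_set_eq_card hs_ind, hs_span, hspan]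
  have hcard' : Fintype.card s = r := by rw [← Set.toFinset_card, hcard]
  let e : Fin r ≃ s := (Fintype.equivFinOfCardEq hcard').symm
  have hpick : ∀ k : Fin r, ∃ i : Fin d, M i = (e k : Fin r → ℝ) := fun k => hs_sub (e k).2
  choose f hf using hpick
  refine ⟨f, ?_⟩
  rw [← Matrix.linearIndependent_rows_iff_isUnit]
  have : (fun i => M.submatrix f id i) = fun k => ((e k : Fin r → ℝ)) := by
    funext k
    rw [← hf k]
    rfl
  show LinearIndependent ℝ (fun i => M.submatrix f id i)
  rw [this]
  exact hs_ind.comp e e.injective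


private lemma nat_bound (d n r N D : ℕ) (hrd : r ≤ d) (hrn : r ≤ n)
    (hd : 1 ≤ d) (hn : 1 ≤ n) (hN : 2 ≤ N) (hD : 1 ≤ D) :
    r * (r.factorial * N ^ r * D ^ (r * r)) ≤
      n * (D ^ (d * (n + 1) * min (d ^ 3) (n ^ 3)) * N ^ (d * (n + 1))) := by
  have hN1 : 1 ≤ N := by omega
  have hfac : r.factorial ≤ N ^ (r * r) := by
    calc r.factorial ≤ r ^ r := Nat.factorial_le_pow r
      _ ≤ (N ^ r) ^ r := Nat.pow_le_pow_left (le_trans (Nat.lt_two_pow_self (n := r)).le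
          (Nat.pow_le_pow_left hN r)) r
      _ = N ^ (r * r) := by rw [← pow_mul]
  have hexp1 : r * r + r ≤ d * (n + 1) := by
    have : r * r ≤ d * n := Nat.mul_le_mul hrd hrn
    have h2 : d * (n + 1) = d * n + d := by ring
    omega
  have hminpos : 1 ≤ min (d ^ 3) (n ^ 3) := by
    have : 1 ≤ d ^ 3 := Nat.one_le_pow _ _ hd
    have : 1 ≤ n ^ 3 := Nat.one_le_pow _ _ hn
    omega
  have hexp2 : r * r ≤ d * (n + 1) * min (d ^ 3) (n ^ 3) := by
    calc r * r ≤ d * n := Nat.mul_le_mul hrd hrn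
      _ ≤ d * (n + 1) * 1 := by nlinarith
      _ ≤ d * (n + 1) * min (d ^ 3) (n ^ 3) := Nat.mul_le_mul_left _ hminpos
  calc r * (r.factorial * N ^ r * D ^ (r * r))
      ≤ n * (N ^ (r * r) * N ^ r * D ^ (d * (n + 1) * min (d ^ 3) (n ^ 3))) := by
        exact Nat.mul_le_mul hrn (Nat.mul_le_mul
          (Nat.mul_le_mul hfac le_rfl) (Nat.pow_le_pow_right hD hexp2))
    _ = n * (N ^ (r * r + r) * D ^ (d * (n + 1) * min (d ^ 3) (n ^ 3))) := by
        rw [pow_add]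
    _ ≤ n * (N ^ (d * (n + 1)) * D ^ (d * (n + 1) * min (d ^ 3) (n ^ 3))) := by
        exact Nat.mul_le_mul_left _ (Nat.mul_le_mul_right _ (Nat.pow_le_pow_right hN1 hexp1))
    _ = n * (D ^ (d * (n + 1) * min (d ^ 3) (n ^ 3)) * N ^ (d * (n + 1))) := by ring

/-- If the entries of `A` and `b` are ratios of integers `a_{ij}/α_{ij}` and `b'_k/β_k`,
`D = max(max |α_{ij}|, max |β_k|)` and `N = max(max |a_{ij}|, max |b'_k|) + 1`, and
`{x : A x = b, x ≥ 0}` is nonempty, then it contains a point `x` with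
`∑ x_i ≤ n · D^(d(n+1)·min(d³,n³)) · N^(d(n+1))`. -/
theorem stmt_12 (d n : ℕ)
    (a : Fin d → Fin n → ℤ) (α : Fin d → Fin n → ℤ) (hα : ∀ i j, α i j ≠ 0)
    (b' : Fin d → ℤ) (β : Fin d → ℤ) (hβ : ∀ k, β k ≠ 0)
    (A : Matrix (Fin d) (Fin n) ℝ) (hA : ∀ i j, A i j = (a i j : ℝ) / (α i j : ℝ))
    (b : Fin d → ℝ) (hb : ∀ k, b k = (b' k : ℝ) / (β k : ℝ))
    (D N : ℕ)
    (hD : D = max (Finset.univ.sup fun ij : Fin d × Fin n => (α ij.1 ij.2).natAbs)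
        (Finset.univ.sup fun k : Fin d => (β k).natAbs))
    (hN : N = max (Finset.univ.sup fun ij : Fin d × Fin n => (a ij.1 ij.2).natAbs)
        (Finset.univ.sup fun k : Fin d => (b' k).natAbs) + 1)
    (hfeas : ∃ x : Fin n → ℝ, A.mulVec x = b ∧ 0 ≤ x) :
    ∃ x : Fin n → ℝ, A.mulVec x = b ∧ 0 ≤ x ∧
      ∑ i, x i ≤ (n : ℝ) * (D : ℝ) ^ (d * (n + 1) * min (d ^ 3) (n ^ 3)) *
        (N : ℝ) ^ (d * (n + 1)) := by
  classical
  obtain ⟨x₀, hx₀b, hx₀0⟩ := hfeas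
  obtain ⟨y, hyb, hy0, hind⟩ := exists_basic d n A b x₀ hx₀b hx₀0
  have hy0' : ∀ j, 0 ≤ y j := hy0
  refine ⟨y, hyb, hy0, ?_⟩
  set r := Fintype.card {j : Fin n // y j ≠ 0} with hrdef
  have hRHS0 : (0:ℝ) ≤ (n : ℝ) * (D:ℝ) ^ (d*(n+1)*min (d^3) (n^3)) * (N:ℝ) ^ (d*(n+1)) := by
    positivity
  by_cases hr0 : r = 0
  · have hzero : ∀ j, y j = 0 := by
      intro j; by_contra hj
      exact (Fintype.card_eq_zero_iff.mp hr0).false ⟨j, hj⟩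
    rw [Finset.sum_eq_zero (fun i _ => hzero i)]
    exact hRHS0
  have hr1 : 1 ≤ r := Nat.one_le_iff_ne_zero.mpr hr0
  -- basic cardinalities
  have hrd : r ≤ d := by
    have h1 := hind.fintype_card_le_finrank
    rwa [Module.finrank_pi ℝ, Fintype.card_fin] at h1
  have hrn : r ≤ n := by
    have := Fintype.card_subtype_le (fun j : Fin n => y j ≠ 0)
    rwa [Fintype.card_fin] at this
  have hd1 : 1 ≤ d := le_trans hr1 hrd
  have hn1 : 1 ≤ n := le_trans hr1 hrn
  -- bounds on the data
  have hN1 : 1 ≤ N := by omega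
  have haN : ∀ i j, ((a i j).natAbs : ℝ) ≤ (N : ℝ) := by
    intro i j
    have h1 : (a i j).natAbs ≤ N := by
      have h2 : (a i j).natAbs ≤ Finset.univ.sup (fun ij : Fin d × Fin n => (a ij.1 ij.2).natAbs) :=
        by exact Finset.le_sup (f := fun ij : Fin d × Fin n => (a ij.1 ij.2).natAbs) (Finset.mem_univ (i, j))
      omega
    exact_mod_cast h1
  have hbN : ∀ k, ((b' k).natAbs : ℝ) ≤ (N : ℝ) := by
    intro k
    have h1 : (b' k).natAbs ≤ N := by
      have h2 : (b' k).natAbs ≤ Finset.univ.sup (fun k : Fin d => (b' k).natAbs) :=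
        by exact Finset.le_sup (f := fun k : Fin d => (b' k).natAbs) (Finset.mem_univ k)
      omega
    exact_mod_cast h1
  have hα1 : ∀ i j, (1:ℝ) ≤ |(α i j : ℝ)| := by
    intro i j
    rw [← Int.cast_abs]
    exact_mod_cast Int.one_le_abs (hα i j)
  have hαD : ∀ i j, |(α i j : ℝ)| ≤ (D : ℝ) := by
    intro i j
    have h1 : (α i j).natAbs ≤ D := by
      have h2 : (α i j).natAbs ≤ Finset.univ.sup (fun ij : Fin d × Fin n => (α ij.1 ij.2).natAbs) :=
        by exact Finset.le_sup (f := fun ij : Fin d × Fin n => (α ij.1 ij.2).natAbs) (Finset.mem_univ (i, j))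
      omega
    rw [← Int.cast_abs, Int.abs_eq_natAbs]
    exact_mod_cast h1
  have hβ1 : ∀ k, (1:ℝ) ≤ |(β k : ℝ)| := by
    intro k
    rw [← Int.cast_abs]
    exact_mod_cast Int.one_le_abs (hβ k)
  have hAN : ∀ i j, |A i j| ≤ (N : ℝ) := by
    intro i j
    rw [hA i j, abs_div]
    calc |(a i j : ℝ)| / |(α i j : ℝ)| ≤ |(a i j : ℝ)| :=
          div_le_self (abs_nonneg _) (hα1 i j)
      _ ≤ (N : ℝ) := by rw [← Int.cast_abs, Int.abs_eq_natAbs]; exact_mod_cast haN i j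
  have hbkN : ∀ k, |b k| ≤ (N : ℝ) := by
    intro k
    rw [hb k, abs_div]
    calc |(b' k : ℝ)| / |(β k : ℝ)| ≤ |(b' k : ℝ)| :=
          div_le_self (abs_nonneg _) (hβ1 k)
      _ ≤ (N : ℝ) := by rw [← Int.cast_abs, Int.abs_eq_natAbs]; exact_mod_cast hbN k
  have hD1 : 1 ≤ D := by
    have h1 : 1 ≤ (β ⟨0, hd1⟩).natAbs := Int.natAbs_pos.mpr (hβ _)
    have h2 : (β (⟨0, hd1⟩ : Fin d)).natAbs ≤ Finset.univ.sup (fun k : Fin d => (β k).natAbs) :=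
      by exact Finset.le_sup (f := fun k : Fin d => (β k).natAbs) (Finset.mem_univ _)
    omega
  have hN2 : 2 ≤ N := by
    by_contra hc
    have hNe : N = 1 := by omega
    have hsup : (Finset.univ.sup fun ij : Fin d × Fin n => (a ij.1 ij.2).natAbs) = 0 := by omega
    have hAzero : ∀ i j, A i j = 0 := by
      intro i j
      have h1 : (a i j).natAbs ≤ Finset.univ.sup (fun ij : Fin d × Fin n => (a ij.1 ij.2).natAbs) :=
        by exact Finset.le_sup (f := fun ij : Fin d × Fin n => (a ij.1 ij.2).natAbs) (Finset.mem_univ (i, j))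
      have h2 : a i j = 0 := Int.natAbs_eq_zero.mp (by omega)
      rw [hA i j, h2, Int.cast_zero, zero_div]
    obtain ⟨j⟩ := Fintype.card_pos_iff.mp (by omega : 0 < r)
    have := hind.ne_zero j
    exact this (funext fun i => hAzero i j)
  -- set up the square subsystem
  set e : Fin r ≃ {j : Fin n // y j ≠ 0} := (Fintype.equivFin _).symm with hedef
  set M : Matrix (Fin d) (Fin r) ℝ := Matrix.of fun i k => A i ((e k : Fin n)) with hMdef
  have hcols : LinearIndependent ℝ (fun k : Fin r => fun i => M i k) :=
    hind.comp e e.injective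
  obtain ⟨f, hfu⟩ := exists_rows d r M hcols
  set Msq : Matrix (Fin r) (Fin r) ℝ := M.submatrix f id with hMsqdef
  have hdetu : IsUnit Msq.det := (Matrix.isUnit_iff_isUnit_det Msq).mp hfu
  have hdet : Msq.det ≠ 0 := by
    intro h; rw [h] at hdetu; exact (not_isUnit_zero hdetu)
  set yS : Fin r → ℝ := fun k => y (e k) with hySdef
  set bT : Fin r → ℝ := fun k => b (f k) with hbTdef
  have hsolve : Msq.mulVec yS = bT := by
    funext k
    have hbk := congrFun hyb (f k)
    calc Msq.mulVec yS k = ∑ j : Fin r, A (f k) (e j : Fin n) * y (e j : Fin n) := rfl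
      _ = ∑ s : {j : Fin n // y j ≠ 0}, A (f k) (s : Fin n) * y (s : Fin n) :=
          Fintype.sum_equiv e _ _ (fun j => rfl)
      _ = ∑ j ∈ Finset.univ.filter (fun j : Fin n => y j ≠ 0), A (f k) j * y j :=
          (Finset.sum_subtype (Finset.univ.filter (fun j : Fin n => y j ≠ 0))
            (fun x => by simp) (fun j => A (f k) j * y j)).symm
      _ = ∑ j : Fin n, A (f k) j * y j := by
          rw [Finset.sum_filter_of_ne]
          intro j _ hne
          intro hyj
          rw [hyj, mul_zero] at hne
          exact hne rfl
      _ = b (f k) := hbk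
  have hcr : Matrix.cramer Msq bT = Msq.det • yS := by
    apply Matrix.mulVec_injective_iff_isUnit.mpr hfu
    rw [Matrix.mulVec_cramer, Matrix.mulVec_smul, hsolve]
  -- upper bound on cramer entries
  have hcram : ∀ k, |Matrix.cramer Msq bT k| ≤ (r.factorial : ℝ) * (N:ℝ) ^ r := by
    intro k
    rw [Matrix.cramer_apply]
    have hent : ∀ i j, AbsoluteValue.abs ((Msq.updateCol k bT) i j) ≤ (N : ℝ) := by
      intro i j
      rw [Matrix.updateCol_apply]
      by_cases hjk : j = k
      · rw [if_pos hjk]; exact hbkN _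
      · rw [if_neg hjk]; exact hAN _ _
    have h3 := Matrix.det_le (abv := (AbsoluteValue.abs : AbsoluteValue ℝ ℝ))
      (A := Msq.updateCol k bT) (x := (N : ℝ)) hent
    simpa [Fintype.card_fin, nsmul_eq_mul, AbsoluteValue.abs_apply] using h3
  -- lower bound on |det Msq|
  set v : Fin r → ℝ := fun j => ∏ i' : Fin r, (α (f i') (e j : Fin n) : ℝ) with hvdef
  set intB : Matrix (Fin r) (Fin r) ℤ := Matrix.of fun i j =>
    a (f i) (e j : Fin n) * ∏ i' ∈ Finset.univ.erase i, α (f i') (e j : Fin n) with hintBdef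
  have hBE : (Matrix.of fun i j => v j * Msq i j) = intB.map (Int.cast : ℤ → ℝ) := by
    ext i j
    simp only [Matrix.of_apply, Matrix.map_apply, hintBdef, hvdef, hMsqdef, hMdef,
      Matrix.submatrix_apply, id_eq, Matrix.of_apply]
    rw [hA]
    rw [← Finset.mul_prod_erase Finset.univ (fun i' => (α (f i') (e j : Fin n) : ℝ))
      (Finset.mem_univ i)]
    have hαne : ((α (f i) (e j : Fin n)) : ℝ) ≠ 0 := Int.cast_ne_zero.mpr (hα _ _)
    push_cast
    field_simp
  have hdetB : ((intB.det : ℤ) : ℝ) = (∏ j, v j) * Msq.det := by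
    have h1 : ((intB.det : ℤ) : ℝ) = (intB.map (Int.cast : ℤ → ℝ)).det := by
      rw [show ((intB.det : ℤ) : ℝ) = (Int.castRingHom ℝ) intB.det from rfl,
        RingHom.map_det]
      rfl
    rw [h1, ← hBE]
    exact Matrix.det_mul_row v Msq
  have hintBne : intB.det ≠ 0 := by
    intro h
    rw [h] at hdetB
    simp only [Int.cast_zero] at hdetB
    have hvne : (∏ j, v j) ≠ 0 := by
      apply Finset.prod_ne_zero_iff.mpr
      intro j _
      apply Finset.prod_ne_zero_iff.mpr
      intro i' _
      exact Int.cast_ne_zero.mpr (hα _ _)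
    exact hdet (by
      rcases mul_eq_zero.mp hdetB.symm with h1 | h2
      · exact absurd h1 hvne
      · exact h2)
  have hvD : |∏ j, v j| ≤ (D:ℝ) ^ (r * r) := by
    rw [Finset.abs_prod]
    calc ∏ j, |v j| ≤ ∏ _j : Fin r, (D:ℝ) ^ r := by
          apply Finset.prod_le_prod (fun j _ => abs_nonneg _)
          intro j _
          rw [hvdef]
          simp only
          rw [Finset.abs_prod]
          calc ∏ i' : Fin r, |(α (f i') (e j : Fin n) : ℝ)| ≤ ∏ _i' : Fin r, (D:ℝ) := by
                apply Finset.prod_le_prod (fun _ _ => abs_nonneg _) (fun i' _ => hαD _ _)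
            _ = (D:ℝ) ^ r := by rw [Finset.prod_const, Finset.card_univ, Fintype.card_fin]
      _ = ((D:ℝ) ^ r) ^ r := by rw [Finset.prod_const, Finset.card_univ, Fintype.card_fin]
      _ = (D:ℝ) ^ (r * r) := by rw [← pow_mul]
  have hlow : 1 ≤ (D:ℝ) ^ (r * r) * |Msq.det| := by
    have h1 : (1:ℝ) ≤ |((intB.det : ℤ) : ℝ)| := by
      rw [← Int.cast_abs]
      exact_mod_cast Int.one_le_abs hintBne
    calc (1:ℝ) ≤ |((intB.det : ℤ) : ℝ)| := h1
      _ = |∏ j, v j| * |Msq.det| := by rw [hdetB, abs_mul]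
      _ ≤ (D:ℝ) ^ (r * r) * |Msq.det| := by
          apply mul_le_mul_of_nonneg_right hvD (abs_nonneg _)
  -- per-coordinate bound
  set B : ℝ := (r.factorial : ℝ) * (N:ℝ) ^ r * (D:ℝ) ^ (r * r) with hBdef
  have hyB : ∀ k : Fin r, yS k ≤ B := by
    intro k
    have h1 : |Msq.det| * yS k ≤ (r.factorial : ℝ) * (N:ℝ) ^ r := by
      have h2 : Msq.det * yS k = Matrix.cramer Msq bT k := by
        rw [hcr]; rfl
      calc |Msq.det| * yS k = |Msq.det * yS k| := by
            rw [abs_mul, abs_of_nonneg (hy0' _)]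
        _ = |Matrix.cramer Msq bT k| := by rw [h2]
        _ ≤ (r.factorial : ℝ) * (N:ℝ) ^ r := hcram k
    have h3 : yS k ≤ ((D:ℝ) ^ (r * r) * |Msq.det|) * yS k := by
      nth_rewrite 1 [← one_mul (yS k)]
      exact mul_le_mul_of_nonneg_right hlow (hy0' _)
    calc yS k ≤ ((D:ℝ) ^ (r * r) * |Msq.det|) * yS k := h3
      _ = (D:ℝ) ^ (r * r) * (|Msq.det| * yS k) := by ring
      _ ≤ (D:ℝ) ^ (r * r) * ((r.factorial : ℝ) * (N:ℝ) ^ r) := by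
          apply mul_le_mul_of_nonneg_left h1 (by positivity)
      _ = B := by rw [hBdef]; ring
  -- sum the bound
  have hsum : ∑ i, y i ≤ (r : ℝ) * B := by
    have hfil : ∑ i, y i = ∑ j ∈ Finset.univ.filter (fun j : Fin n => y j ≠ 0), y j := by
      rw [Finset.sum_filter_of_ne]
      intro j _ h; intro hyj; exact h hyj
    rw [hfil]
    have hcardfil : (Finset.univ.filter fun j : Fin n => y j ≠ 0).card = r := by
      rw [hrdef, Fintype.card_subtype]
    calc ∑ j ∈ Finset.univ.filter (fun j : Fin n => y j ≠ 0), y j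
        ≤ (Finset.univ.filter fun j : Fin n => y j ≠ 0).card • B := by
          apply Finset.sum_le_card_nsmul
          intro j hj
          simp only [Finset.mem_filter, Finset.mem_univ, true_and] at hj
          have : y j = yS (e.symm ⟨j, hj⟩) := by
            rw [hySdef]; simp
          rw [this]
          exact hyB _
      _ = (r : ℝ) * B := by rw [hcardfil, nsmul_eq_mul]
  -- numeric conclusion
  have hnat := nat_bound d n r N D hrd hrn hd1 hn1 hN2 hD1
  calc ∑ i, y i ≤ (r : ℝ) * B := hsum
    _ = ((r * (r.factorial * N ^ r * D ^ (r * r)) : ℕ) : ℝ) := by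
        rw [hBdef]; push_cast; ring
    _ ≤ ((n * (D ^ (d * (n + 1) * min (d ^ 3) (n ^ 3)) * N ^ (d * (n + 1))) : ℕ) : ℝ) := by
        exact_mod_cast hnat
    _ = (n : ℝ) * (D : ℝ) ^ (d * (n + 1) * min (d ^ 3) (n ^ 3)) * (N : ℝ) ^ (d * (n + 1)) := by
        push_cast; ring
end

section
/- Let p_1, …, p_n ∈ ℝ^d, let ε > 0, let t ≤ n, and for each i let w_i = (p_i, ε·u_i) ∈ ℝ^{d+t} where u_i ∈ ℝ^t, and suppose that for each coordinate k ∈ {1, …, t} the vector ((u_1)_k, …, (u_n)_k) ∈ ℝ^n has Euclidean norm at most 1. Then the squared Euclidean distance from 0 to conv{w_1, …, w_n} is at most the squared Euclidean distance from 0 to conv{p_1, …, p_n} plus ε²·n. -/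
/-!
Every point of `conv{p_i}` is a convex combination `∑ aᵢ pᵢ`, and the same weights give the point
`∑ aᵢ wᵢ = (∑ aᵢ pᵢ, ε ∑ aᵢ uᵢ)` of `conv{w_i}`. Its `k`-th extra coordinate is `ε ∑ᵢ aᵢ (uᵢ)ₖ`,
whose square is at most `ε²` by Jensen's inequality since the weights lie in `[0, 1]` and
the `k`-th column of `u` has norm at most `1`; summing over the `t ≤ n` extra coordinates costs at
most `ε² n`.
-/

open Finset

theorem convexHull_range_eq_image_stdSimplex {R ι E : Type*} [Field R] [LinearOrder R]
    [IsStrictOrderedRing R] [Fintype ι] [AddCommGroup E] [Module R E] (v : ι → E) :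
    convexHull R (Set.range v) = (fun a : ι → R ↦ ∑ i, a i • v i) '' stdSimplex R ι := by
  classical
  change _ = Fintype.linearCombination R v '' _
  rw [← convexHull_basis_eq_stdSimplex, LinearMap.image_convexHull, ← Set.range_comp]
  congr 2
  funext i
  simp [Fintype.linearCombination_apply]

theorem sq_sum_mul_le_sum_sq {ι : Type*} [Fintype ι] {a : ι → ℝ} (ha : a ∈ stdSimplex ℝ ι)
    (v : ι → ℝ) : (∑ i, a i * v i) ^ 2 ≤ ∑ i, v i ^ 2 :=
  calc (∑ i, a i * v i) ^ 2 ≤ ∑ i, a i * v i ^ 2 :=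
        (even_two.convexOn_pow (𝕜 := ℝ)).map_sum_le (fun i _ ↦ ha.1 i) ha.2 (by simp)
    _ ≤ ∑ i, v i ^ 2 := sum_le_sum fun i _ ↦
        mul_le_of_le_one_left (sq_nonneg _) (mem_Icc_of_mem_stdSimplex ha i).2

theorem EuclideanSpace.norm_sq_eq_sum_castAdd_add_sum_natAdd {m n : ℕ}
    (x : EuclideanSpace ℝ (Fin (m + n))) :
    ‖x‖ ^ 2 = ∑ k : Fin m, x (Fin.castAdd n k) ^ 2 + ∑ k : Fin n, x (Fin.natAdd m k) ^ 2 := by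
  simp only [EuclideanSpace.norm_sq_eq, Real.norm_eq_abs, sq_abs]
  exact Fin.sum_univ_add _

theorem csInf_le_csInf_add {S T : Set ℝ} (hS : BddBelow S) (hT : T.Nonempty) {c : ℝ}
    (h : ∀ b ∈ T, ∃ a ∈ S, a ≤ b + c) : sInf S ≤ sInf T + c := by
  rw [← sub_le_iff_le_add]
  refine le_csInf hT fun b hb ↦ ?_
  obtain ⟨a, ha, hab⟩ := h b hb
  exact sub_le_iff_le_add.2 ((csInf_le hS ha).trans hab)

theorem norm_sq_sum_smul_le_of_lift {ι : Type*} [Fintype ι] {d t : ℕ} (ε : ℝ)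
    {p : ι → EuclideanSpace ℝ (Fin d)} {u : ι → Fin t → ℝ} (hu : ∀ k, ∑ i, u i k ^ 2 ≤ 1)
    {w : ι → EuclideanSpace ℝ (Fin (d + t))}
    (hw₁ : ∀ i (k : Fin d), w i (Fin.castAdd t k) = p i k)
    (hw₂ : ∀ i (k : Fin t), w i (Fin.natAdd d k) = ε * u i k)
    {a : ι → ℝ} (ha : a ∈ stdSimplex ℝ ι) :
    ‖∑ i, a i • w i‖ ^ 2 ≤ ‖∑ i, a i • p i‖ ^ 2 + ε ^ 2 * t := by
  have hcoord : ∀ {m} (v : ι → EuclideanSpace ℝ (Fin m)) j,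
      (∑ i, a i • v i) j = ∑ i, a i * v i j := fun v j ↦ by simp [WithLp.ofLp_sum, Finset.sum_apply]
  rw [EuclideanSpace.norm_sq_eq_sum_castAdd_add_sum_natAdd, EuclideanSpace.real_norm_sq_eq]
  simp only [hcoord, hw₁, hw₂]
  gcongr
  calc ∑ k : Fin t, (∑ i, a i * (ε * u i k)) ^ 2
      = ∑ k : Fin t, ε ^ 2 * (∑ i, a i * u i k) ^ 2 := by
        simp only [mul_left_comm _ ε, ← mul_sum, mul_pow]
    _ ≤ ∑ _k : Fin t, ε ^ 2 := sum_le_sum fun k _ ↦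
        mul_le_of_le_one_right (sq_nonneg ε) ((sq_sum_mul_le_sum_sq ha _).trans (hu k))
    _ = ε ^ 2 * t := by simp [mul_comm]

theorem stmt_16_general (d t n : ℕ) (htn : t ≤ n) (ε : ℝ)
    (p : Fin n → EuclideanSpace ℝ (Fin d))
    (u : Fin n → Fin t → ℝ)
    (hu : ∀ k : Fin t, Real.sqrt (∑ i, u i k ^ 2) ≤ 1)
    (w : Fin n → EuclideanSpace ℝ (Fin (d + t)))
    (hw₁ : ∀ i (k : Fin d), w i (Fin.castAdd t k) = p i k)
    (hw₂ : ∀ i (k : Fin t), w i (Fin.natAdd d k) = ε * u i k) :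
    sInf {r : ℝ | ∃ q ∈ convexHull ℝ (Set.range w), r = ‖q‖ ^ 2} ≤
      sInf {r : ℝ | ∃ q ∈ convexHull ℝ (Set.range p), r = ‖q‖ ^ 2} + ε ^ 2 * n := by
  rcases isEmpty_or_nonempty (Fin n) with hn | hn
  · simp only [Set.range_eq_empty, convexHull_empty, Set.mem_empty_iff_false, false_and,
      exists_const, Set.ofPred_false, Real.sInf_empty, zero_add]
    positivity
  refine csInf_le_csInf_add ⟨0, ?_⟩ ?_ ?_
  · rintro _ ⟨q, -, rfl⟩
    positivity
  · exact ⟨_, _, subset_convexHull ℝ _ (Set.mem_range_self hn.some), rfl⟩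
  rintro _ ⟨_, hq, rfl⟩
  obtain ⟨a, ha, rfl⟩ := (convexHull_range_eq_image_stdSimplex p).subset hq
  refine ⟨_, ⟨_, (convexHull_range_eq_image_stdSimplex w).superset ⟨a, ha, rfl⟩, rfl⟩, ?_⟩
  calc ‖∑ i, a i • w i‖ ^ 2 ≤ ‖∑ i, a i • p i‖ ^ 2 + ε ^ 2 * t :=
        norm_sq_sum_smul_le_of_lift ε (fun k ↦ Real.sqrt_le_one.mp (hu k)) hw₁ hw₂ ha
    _ ≤ ‖∑ i, a i • p i‖ ^ 2 + ε ^ 2 * n := by gcongr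

/-- Lifting points by `ε`-small extra coordinates increases the squared distance from the
origin to the convex hull by at most `ε²·n`: if `w_i = (p_i, ε·u_i) ∈ ℝ^(d+t)` and for each
coordinate `k` the vector `((u_1)_k, …, (u_n)_k)` has Euclidean norm at most `1`, then
`d(0, conv{w_i})² ≤ d(0, conv{p_i})² + ε²·n`. -/
theorem stmt_16 (d t n : ℕ) (htn : t ≤ n) (ε : ℝ) (hε : 0 < ε)
    (p : Fin n → EuclideanSpace ℝ (Fin d))
    (u : Fin n → Fin t → ℝ)
    (hu : ∀ k : Fin t, Real.sqrt (∑ i, u i k ^ 2) ≤ 1)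
    (w : Fin n → EuclideanSpace ℝ (Fin (d + t)))
    (hw₁ : ∀ i (k : Fin d), w i (Fin.castAdd t k) = p i k)
    (hw₂ : ∀ i (k : Fin t), w i (Fin.natAdd d k) = ε * u i k) :
    sInf {r : ℝ | ∃ q ∈ convexHull ℝ (Set.range w), r = ‖q‖ ^ 2} ≤
      sInf {r : ℝ | ∃ q ∈ convexHull ℝ (Set.range p), r = ‖q‖ ^ 2} + ε ^ 2 * n :=
  stmt_16_general d t n htn ε p u hu w hw₁ hw₂
end
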